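/- arXiv:1801.05488 — 5 statements merged into one kernel-verified Lean document; each statement's English description precedes it below -/
import Mathlib

section
/- Fix k ≥ 1, p ≥ 0, j ∈ Fin (k+1), and a subset S ⊆ Fin (k+1) with j ∉ S; let β = {x ∈ Δ_k : x_i = 0 for all i ∉ S}. Let φ be the retraction φ(x)_i = x_i/(1 − x_j) for i ≠ j, φ(x)_j = 0, defined on V = {x ∈ ℝ^{k+1} : x_j ≠ 1}, and let ω : ℝ^{k+1} → AlternatingMap ℝ ℝ^{k+1} ℝ (Fin p) be any map. Define the pullback φ*ω on V by (φ*ω)(x)(u_1, …, u_p) = ω(φ(x))(D_xφ(u_1), …, D_xφ(u_p)), where D_xφ = fderiv ℝ φ x. If ω(y) = 0 for every y ∈ β, then (φ*ω)(x) = 0 for every x ∈ Δ_k with x_i = 0 for all i ∉ S ∪ {j} and x ≠ e_j; that is, the pullback vanishes at every point of the join β ∗ e_j other than the apex e_j. -/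
/-- if a `p`-form `ω` on `ℝ^{k+1}` vanishes at every point of the
face `β = {x ∈ Δ_k : x i = 0 for all i ∉ S}` (with `j ∉ S`), then the pullback
`φ*ω` along the retraction `φ` (given by `φ(x)_i = x_i / (1 - x_j)` for `i ≠ j`
and `φ(x)_j = 0`), defined by
`(φ*ω)(x)(u_1, …, u_p) = ω(φ x)(D_xφ u_1, …, D_xφ u_p)`,
vanishes at every point of the join `β ∗ e_j` other than the apex `e_j`. -/
theorem pullback_vanishes_on_join
    (k p : ℕ) (hk : 1 ≤ k) (j : Fin (k + 1)) (S : Set (Fin (k + 1))) (hjS : j ∉ S)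
    (φ : (Fin (k + 1) → ℝ) → (Fin (k + 1) → ℝ))
    (hφ : ∀ x : Fin (k + 1) → ℝ, ∀ i : Fin (k + 1),
      φ x i = if i = j then 0 else x i / (1 - x j))
    (ω : (Fin (k + 1) → ℝ) → AlternatingMap ℝ (Fin (k + 1) → ℝ) ℝ (Fin p))
    (hω : ∀ y : Fin (k + 1) → ℝ,
      y ∈ stdSimplex ℝ (Fin (k + 1)) → (∀ i : Fin (k + 1), i ∉ S → y i = 0) →
        ω y = 0)
    (x : Fin (k + 1) → ℝ) (hx : x ∈ stdSimplex ℝ (Fin (k + 1)))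
    (hxJoin : ∀ i : Fin (k + 1), i ∉ S ∪ {j} → x i = 0)
    (hxj : x ≠ Pi.single j 1) :
    ∀ u : Fin p → (Fin (k + 1) → ℝ),
      ω (φ x) (fun l => fderiv ℝ φ x (u l)) = 0 := by
  intro u
  obtain ⟨hnn, hsum⟩ := hx
  -- x j ≠ 1
  have hxj1 : x j ≠ 1 := by
    intro h1
    apply hxj
    funext i
    by_cases hij : i = j
    · subst hij; simp [h1]
    · have hle : x i ≤ 0 := by
        have := Finset.sum_erase_eq_sub (f := x) (Finset.mem_univ j)
        have hrest : ∑ m ∈ Finset.univ.erase j, x m = 0 := by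
          rw [this, hsum, h1]; ring
        have : x i ≤ ∑ m ∈ Finset.univ.erase j, x m :=
          Finset.single_le_sum (fun m _ => hnn m)
            (Finset.mem_erase.2 ⟨hij, Finset.mem_univ i⟩)
        linarith
      have := hnn i
      have hxi : x i = 0 := le_antisymm hle this
      simp [Pi.single_apply, hij, hxi]
  have hxjle : x j ≤ 1 := by
    have := Finset.single_le_sum (f := x) (fun m _ => hnn m) (Finset.mem_univ j)
    linarith
  have hpos : 0 < 1 - x j := lt_of_le_of_ne (by linarith) (by
    intro h; exact hxj1 (by linarith))
  -- φ x ∈ β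
  have hmem : φ x ∈ stdSimplex ℝ (Fin (k + 1)) := by
    constructor
    · intro i
      rw [hφ]
      by_cases hij : i = j
      · simp [hij]
      · simp only [hij, if_false]
        exact div_nonneg (hnn i) hpos.le
    · have hsum' : ∑ i, φ x i = ∑ i, (if i = j then 0 else x i / (1 - x j)) := by
        exact Finset.sum_congr rfl fun i _ => hφ x i
      rw [hsum']
      have he := Finset.sum_erase_eq_sub
        (f := fun i => if i = j then 0 else x i / (1 - x j)) (Finset.mem_univ j)
      beta_reduce at he; rw [if_pos rfl, sub_zero] at he
      have : ∑ i, (if i = j then 0 else x i / (1 - x j))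
          = (∑ i ∈ Finset.univ.erase j, x i) / (1 - x j) := by
        rw [← he, Finset.sum_div]
        exact Finset.sum_congr rfl fun i hi =>
          by rw [if_neg (Finset.mem_erase.1 hi).1]
      rw [this, Finset.sum_erase_eq_sub (Finset.mem_univ j), hsum]
      field_simp
  have hzero : ∀ i : Fin (k + 1), i ∉ S → φ x i = 0 := by
    intro i hiS
    rw [hφ]
    by_cases hij : i = j
    · simp [hij]
    · have : x i = 0 := hxJoin i (by simp [hiS, hij])
      simp [hij, this]
  rw [hω (φ x) hmem hzero]
  rfl
end

section
/- Let s ⊆ ℝⁿ be a finite affinely independent set with |s| = k+1 ≥ 2, and fix p ∈ ℕ. Then every piecewise smooth p-form ξ on the boundary complex bd(s) extends to a piecewise smooth p-form ω on the full complex Δ(s), i.e. ω|bd(s) = ξ. -/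
open Geometry

/-- A piecewise smooth `p`-form on a (geometric simplicial) complex `K` of
finsets in `ℝⁿ`: a family assigning to each simplex `s ∈ K` a `p`-form
`ω s : ℝⁿ → AlternatingMap ℝ ℝⁿ ℝ (Fin p)` which is smooth on `conv s`
(`C^∞` in `x` for each fixed tuple of vectors), compatible under restriction
to faces: for `t ⊆ s`, the forms `ω t` and `ω s` agree at every `x ∈ conv t`
on tuples of vectors from `vectorSpan ℝ t`. -/
def IsPiecewiseSmoothForm (n p : ℕ) (K : Set (Finset (Fin n → ℝ)))
    (ω : Finset (Fin n → ℝ) → (Fin n → ℝ) → AlternatingMap ℝ (Fin n → ℝ) ℝ (Fin p)) :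
    Prop :=
  (∀ s ∈ K, ∀ u : Fin p → (Fin n → ℝ),
    ContDiffOn ℝ (⊤ : ℕ∞) (fun x => ω s x u) (convexHull ℝ (s : Set (Fin n → ℝ)))) ∧
  (∀ t ∈ K, ∀ s ∈ K, t ⊆ s →
    ∀ x ∈ convexHull ℝ (t : Set (Fin n → ℝ)), ∀ u : Fin p → (Fin n → ℝ),
      (∀ l : Fin p, u l ∈ vectorSpan ℝ (t : Set (Fin n → ℝ))) → ω t x u = ω s x u)

/-- The full simplicial complex `Δ(s)` of all nonempty subsets of a finset `s`. -/
def fullComplex (n : ℕ) (s : Finset (Fin n → ℝ)) : Set (Finset (Fin n → ℝ)) :=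
  {t | t ⊆ s ∧ t.Nonempty}

/-- The boundary complex `bd(s)` of all nonempty proper subsets of a finset `s`. -/
def boundaryComplex (n : ℕ) (s : Finset (Fin n → ℝ)) : Set (Finset (Fin n → ℝ)) :=
  {t | t ⊂ s ∧ t.Nonempty}

/-- `L` is a subcomplex of the complex `K`: a subset of `K` closed under
taking nonempty subsets. -/
def IsSubcomplex (n : ℕ) (K L : Set (Finset (Fin n → ℝ))) : Prop :=
  L ⊆ K ∧ ∀ s ∈ L, ∀ t : Finset (Fin n → ℝ), t ⊆ s → t.Nonempty → t ∈ L


noncomputable section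
namespace Ext6

variable {n p : ℕ}

def chi (r : ℝ) : ℝ := Real.smoothTransition (3 * r - 1)

lemma chi_zero {r : ℝ} (h : r ≤ 1/3) : chi r = 0 :=
  Real.smoothTransition.zero_of_nonpos (by linarith)

lemma chi_one : chi 1 = 1 :=
  Real.smoothTransition.one_of_one_le (by norm_num)

lemma chi_contDiff : ContDiff ℝ (⊤ : ℕ∞) chi :=
  Real.smoothTransition.contDiff.comp ((contDiff_const.mul contDiff_id).sub contDiff_const)

lemma affine_contDiff (f : (Fin n → ℝ) →ᵃ[ℝ] ℝ) : ContDiff ℝ (⊤ : ℕ∞) f := by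
  rw [AffineMap.decomp f]
  exact (f.linear.toContinuousLinearMap.contDiff).add contDiff_const

/-- Existence of "barycentric coordinate" affine functionals for an affinely
independent finset. -/
lemma exists_lam (s : Finset (Fin n → ℝ)) (hs : AffineIndependent ℝ ((↑) : s → (Fin n → ℝ)))
    (hne : s.Nonempty) :
    ∃ lam : (Fin n → ℝ) → ((Fin n → ℝ) →ᵃ[ℝ] ℝ),
      ∀ v ∈ s, ∀ w ∈ s, lam v w = if v = w then 1 else 0 := by
  have hs' : AffineIndependent ℝ (fun pt : (s : Set (Fin n → ℝ)) => (pt : Fin n → ℝ)) := hs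
  obtain ⟨T, hsT, hTind, hTspan⟩ := exists_subset_affineIndependent_affineSpan_eq_top hs'
  have hTne : Nonempty T := ⟨⟨hne.choose, hsT hne.choose_spec⟩⟩
  let b : AffineBasis T ℝ (Fin n → ℝ) := ⟨fun pt => (pt : Fin n → ℝ), hTind, by
    rw [Subtype.range_coe]; exact hTspan⟩
  classical
  refine ⟨fun v => if h : v ∈ T then b.coord ⟨v, h⟩ else 0, ?_⟩
  intro v hv w hw
  have hvT : v ∈ T := hsT hv
  have hwT : w ∈ T := hsT hw
  have h1 : (fun v => if h : v ∈ T then b.coord ⟨v, h⟩ else (0 : (Fin n → ℝ) →ᵃ[ℝ] ℝ)) v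
      = b.coord ⟨v, hvT⟩ := dif_pos hvT
  rw [h1]
  have h3 := b.coord_apply ⟨v, hvT⟩ ⟨w, hwT⟩
  simp only [Subtype.mk.injEq] at h3
  exact h3.trans (by by_cases h : v = w <;> simp [h])

variable (lam : (Fin n → ℝ) → ((Fin n → ℝ) →ᵃ[ℝ] ℝ))

def Lam (t : Finset (Fin n → ℝ)) (x : Fin n → ℝ) : ℝ := ∑ w ∈ t, lam w x

def rho (t : Finset (Fin n → ℝ)) (x : Fin n → ℝ) : Fin n → ℝ :=
  (Lam lam t x)⁻¹ • ∑ w ∈ t, lam w x • w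

def Pmap (t : Finset (Fin n → ℝ)) (x : Fin n → ℝ) : (Fin n → ℝ) →ₗ[ℝ] (Fin n → ℝ) :=
  ∑ w ∈ t, ((lam w).linear).smulRight (w - rho lam t x)

lemma Pmap_apply (t : Finset (Fin n → ℝ)) (x u : Fin n → ℝ) :
    Pmap lam t x u = ∑ w ∈ t, (lam w).linear u • (w - rho lam t x) := by
  simp [Pmap, LinearMap.sum_apply, LinearMap.smulRight_apply]

lemma affine_comb (f : (Fin n → ℝ) →ᵃ[ℝ] ℝ) {t : Finset (Fin n → ℝ)} (w : (Fin n → ℝ) → ℝ)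
    (h1 : ∑ y ∈ t, w y = 1) :
    f (∑ y ∈ t, w y • y) = ∑ y ∈ t, w y * f y := by
  have hd : ∀ z, f z = f.linear z + f 0 := by
    intro z; conv_lhs => rw [AffineMap.decomp f]
    rfl
  rw [hd]
  rw [map_sum]
  have : ∀ y ∈ t, (f.linear) (w y • y) = w y * f.linear y := by
    intro y _; rw [map_smul]; rfl
  rw [Finset.sum_congr rfl this]
  have : ∑ y ∈ t, w y * f y = ∑ y ∈ t, (w y * f.linear y + w y * f 0) := by
    apply Finset.sum_congr rfl; intro y _; rw [hd y]; ring
  rw [this, Finset.sum_add_distrib, ← Finset.sum_mul, h1]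
  ring

/-- Coordinates of points in the hull of a face. -/
lemma coords {s : Finset (Fin n → ℝ)}
    (hlam : ∀ v ∈ s, ∀ w ∈ s, lam v w = if v = w then 1 else 0)
    {t : Finset (Fin n → ℝ)} (hts : t ⊆ s) {x : Fin n → ℝ}
    (hx : x ∈ convexHull ℝ (t : Set (Fin n → ℝ))) :
    (∀ v ∈ s, 0 ≤ lam v x) ∧ (∀ v ∈ s, v ∉ t → lam v x = 0) ∧
    (∑ w ∈ t, lam w x = 1) ∧ (∑ w ∈ t, lam w x • w = x) := by
  classical
  rw [Finset.convexHull_eq] at hx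
  obtain ⟨w, hw0, hw1, hwx⟩ := hx
  rw [Finset.centerMass_eq_of_sum_1 _ _ hw1] at hwx
  simp only [id] at hwx
  have key : ∀ v ∈ s, lam v x = if v ∈ t then w v else 0 := by
    intro v hv
    rw [← hwx, affine_comb (lam v) w hw1]
    have : ∀ y ∈ t, w y * lam v y = if v = y then w y else 0 := by
      intro y hy
      rw [hlam v hv y (hts hy)]
      by_cases h : v = y <;> simp [h]
    rw [Finset.sum_congr rfl this, Finset.sum_ite_eq]
  refine ⟨?_, ?_, ?_, ?_⟩
  · intro v hv
    rw [key v hv]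
    by_cases h : v ∈ t
    · simpa [h] using hw0 v h
    · simp [h]
  · intro v hv hvt
    rw [key v hv, if_neg hvt]
  · rw [Finset.sum_congr rfl (fun y hy => key y (hts hy))]
    rw [Finset.sum_congr rfl (fun y hy => if_pos hy)]
    exact hw1
  · rw [Finset.sum_congr rfl (fun y hy => by rw [key y (hts hy), if_pos hy])]
    exact hwx

/-- Coordinates of tangent vectors. -/
lemma tangent {s : Finset (Fin n → ℝ)}
    (hlam : ∀ v ∈ s, ∀ w ∈ s, lam v w = if v = w then 1 else 0)
    {t : Finset (Fin n → ℝ)} (hts : t ⊆ s) {u : Fin n → ℝ}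
    (hu : u ∈ vectorSpan ℝ (t : Set (Fin n → ℝ))) :
    (∀ v ∈ s, v ∉ t → (lam v).linear u = 0) ∧ (∑ w ∈ t, (lam w).linear u = 0) ∧
    (∑ w ∈ t, (lam w).linear u • w = u) := by
  classical
  induction hu using Submodule.span_induction with
  | mem z hz =>
    obtain ⟨a, ha, b, hb, rfl⟩ := Set.mem_vsub.1 hz
    have ha' : a ∈ t := ha
    have hb' : b ∈ t := hb
    have hlin : ∀ v ∈ s, (lam v).linear (a -ᵥ b) = lam v a - lam v b := fun v _ =>
      (lam v).linearMap_vsub a b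
    refine ⟨?_, ?_, ?_⟩
    · intro v hv hvt
      rw [hlin v hv, hlam v hv a (hts ha'), hlam v hv b (hts hb')]
      have h1 : v ≠ a := fun h => hvt (h ▸ ha')
      have h2 : v ≠ b := fun h => hvt (h ▸ hb')
      simp [h1, h2]
    · rw [Finset.sum_congr rfl (fun y hy => hlin y (hts hy))]
      rw [Finset.sum_sub_distrib]
      have hA : ∀ y ∈ t, lam y a = if y = a then (1:ℝ) else 0 := fun y hy =>
        hlam y (hts hy) a (hts ha')
      have hB : ∀ y ∈ t, lam y b = if y = b then (1:ℝ) else 0 := fun y hy =>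
        hlam y (hts hy) b (hts hb')
      rw [Finset.sum_congr rfl hA, Finset.sum_congr rfl hB]
      rw [Finset.sum_ite_eq' t a (fun _ => (1:ℝ)), Finset.sum_ite_eq' t b (fun _ => (1:ℝ))]
      simp [ha', hb']
    · rw [Finset.sum_congr rfl (fun y hy => by rw [hlin y (hts hy)])]
      have : ∀ y ∈ t, (lam y a - lam y b) • y
          = (if y = a then (1:ℝ) else 0) • y - (if y = b then (1:ℝ) else 0) • y := by
        intro y hy
        rw [hlam y (hts hy) a (hts ha'), hlam y (hts hy) b (hts hb'), sub_smul]
      rw [Finset.sum_congr rfl this, Finset.sum_sub_distrib]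
      have hA : ∑ y ∈ t, (if y = a then (1:ℝ) else 0) • y = a := by
        have : ∀ y ∈ t, (if y = a then (1:ℝ) else 0) • y = if y = a then a else 0 := by
          intro y _; by_cases h : y = a <;> simp [h]
        rw [Finset.sum_congr rfl this, Finset.sum_ite_eq' t a (fun _ => a), if_pos ha']
      have hB : ∑ y ∈ t, (if y = b then (1:ℝ) else 0) • y = b := by
        have : ∀ y ∈ t, (if y = b then (1:ℝ) else 0) • y = if y = b then b else 0 := by
          intro y _; by_cases h : y = b <;> simp [h]
        rw [Finset.sum_congr rfl this, Finset.sum_ite_eq' t b (fun _ => b), if_pos hb']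
      rw [hA, hB]
      rfl
  | zero => simp
  | add z₁ z₂ h₁ h₂ ih₁ ih₂ =>
    refine ⟨?_, ?_, ?_⟩
    · intro v hv hvt
      rw [map_add, ih₁.1 v hv hvt, ih₂.1 v hv hvt, add_zero]
    · simp only [map_add]
      rw [Finset.sum_add_distrib, ih₁.2.1, ih₂.2.1, add_zero]
    · simp only [map_add, add_smul]
      rw [Finset.sum_add_distrib, ih₁.2.2, ih₂.2.2]
  | smul a z hz ih =>
    refine ⟨?_, ?_, ?_⟩
    · intro v hv hvt
      rw [map_smul, ih.1 v hv hvt, smul_zero]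
    · simp only [map_smul, smul_eq_mul]
      rw [← Finset.mul_sum, ih.2.1, mul_zero]
    · simp only [map_smul, smul_eq_mul, mul_smul]
      rw [← Finset.smul_sum, ih.2.2]

lemma rho_mem {t : Finset (Fin n → ℝ)} {x : Fin n → ℝ}
    (h0 : ∀ v ∈ t, 0 ≤ lam v x) (hpos : 0 < Lam lam t x) :
    rho lam t x ∈ convexHull ℝ (t : Set (Fin n → ℝ)) := by
  have := Finset.centerMass_mem_convexHull t h0 (by simpa [Lam] using hpos)
    (fun i hi => (Finset.mem_coe.2 hi : (id i : Fin n → ℝ) ∈ (t : Set (Fin n → ℝ))))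
  simpa [Finset.centerMass, rho, Lam] using this

lemma rho_self {t : Finset (Fin n → ℝ)} {x : Fin n → ℝ}
    (h1 : ∑ w ∈ t, lam w x = 1) (hx : ∑ w ∈ t, lam w x • w = x) :
    Lam lam t x = 1 ∧ rho lam t x = x := by
  constructor
  · simpa [Lam] using h1
  · simp [rho, Lam, h1, hx]

/-- If the coordinates vanish outside `t₀`, the sums over `t` reduce to `t ∩ t₀`. -/
lemma rho_restrict {t t₀ : Finset (Fin n → ℝ)} {x : Fin n → ℝ}
    (h0 : ∀ v ∈ t, v ∉ t₀ → lam v x = 0) :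
    Lam lam t x = Lam lam (t ∩ t₀) x ∧ rho lam t x = rho lam (t ∩ t₀) x := by
  classical
  have hsub : t ∩ t₀ ⊆ t := Finset.inter_subset_left
  have hL : Lam lam t x = Lam lam (t ∩ t₀) x := by
    unfold Lam
    rw [← Finset.sum_subset hsub]
    intro y hy hy'
    exact h0 y hy (fun h => hy' (Finset.mem_inter.2 ⟨hy, h⟩))
  have hv : (∑ w ∈ t, lam w x • w) = ∑ w ∈ t ∩ t₀, lam w x • w := by
    rw [← Finset.sum_subset hsub]
    intro y hy hy'
    rw [h0 y hy (fun h => hy' (Finset.mem_inter.2 ⟨hy, h⟩)), zero_smul]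
  rw [rho, rho, hL, hv]
  exact ⟨rfl, rfl⟩

lemma Pmap_self {t : Finset (Fin n → ℝ)} {x : Fin n → ℝ} (hrho : rho lam t x = x)
    {u : Fin n → ℝ} (h2 : ∑ w ∈ t, (lam w).linear u = 0)
    (h3 : ∑ w ∈ t, (lam w).linear u • w = u) :
    Pmap lam t x u = u := by
  rw [Pmap_apply, hrho]
  have : ∀ w ∈ t, (lam w).linear u • (w - x) = (lam w).linear u • w - (lam w).linear u • x :=
    fun w _ => smul_sub _ _ _
  rw [Finset.sum_congr rfl this, Finset.sum_sub_distrib, h3, ← Finset.sum_smul, h2, zero_smul,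
    sub_zero]

/-- If the coordinates of `u` vanish outside `t₀`, `Pmap t x u` reduces to a sum over `t ∩ t₀`. -/
lemma Pmap_restrict {t t₀ : Finset (Fin n → ℝ)} {x u : Fin n → ℝ}
    (h0 : ∀ v ∈ t, v ∉ t₀ → (lam v).linear u = 0) :
    Pmap lam t x u = ∑ w ∈ t ∩ t₀, (lam w).linear u • (w - rho lam t x) := by
  classical
  rw [Pmap_apply, ← Finset.sum_subset (Finset.inter_subset_left (s₁ := t) (s₂ := t₀))]
  intro y hy hy'
  rw [h0 y hy (fun h => hy' (Finset.mem_inter.2 ⟨hy, h⟩)), zero_smul]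

/-- Membership of `Pmap t x u` in the tangent space of `q = t ∩ t₀`. -/
lemma Pmap_mem_vectorSpan {q : Finset (Fin n → ℝ)} {c : Fin n → ℝ}
    (hc : c ∈ convexHull ℝ (q : Set (Fin n → ℝ))) {f : (Fin n → ℝ) → ℝ} :
    (∑ w ∈ q, f w • (w - c)) ∈ vectorSpan ℝ (q : Set (Fin n → ℝ)) := by
  apply Submodule.sum_mem
  intro w hw
  apply Submodule.smul_mem
  have hw' : w ∈ affineSpan ℝ (q : Set (Fin n → ℝ)) := subset_affineSpan ℝ _ hw
  have hc' : c ∈ affineSpan ℝ (q : Set (Fin n → ℝ)) := by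
    have : convexHull ℝ (q : Set (Fin n → ℝ)) ⊆ (affineSpan ℝ (q : Set (Fin n → ℝ)) : Set _) :=
      convexHull_min (subset_affineSpan ℝ _) (AffineSubspace.convex _)
    exact this hc
  have := AffineSubspace.vsub_mem_direction hw' hc'
  simpa [vsub_eq_sub, direction_affineSpan] using this

lemma alt_expand (A : AlternatingMap ℝ (Fin n → ℝ) ℝ (Fin p)) (v : Fin p → (Fin n → ℝ)) :
    A v = ∑ r : Fin p → Fin n, (∏ l, v l (r l)) • A (fun l => Pi.single (r l) 1) := by
  classical
  have h1 : v = fun l => ∑ i : Fin n, v l i • (Pi.single i 1 : Fin n → ℝ) := by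
    funext l
    ext j
    simp [Pi.single_apply, Finset.sum_apply]
  calc A v = A (fun l => ∑ i : Fin n, v l i • (Pi.single i 1 : Fin n → ℝ)) := by rw [← h1]
    _ = ∑ r : Fin p → Fin n, A (fun l => v l (r l) • (Pi.single (r l) 1 : Fin n → ℝ)) :=
        A.toMultilinearMap.map_sum (fun l i => v l i • (Pi.single i 1 : Fin n → ℝ))
    _ = ∑ r : Fin p → Fin n, (∏ l, v l (r l)) • A (fun l => Pi.single (r l) 1) := by
        apply Finset.sum_congr rfl
        intro r _
        exact A.toMultilinearMap.map_smul_univ (fun l => v l (r l)) (fun l => Pi.single (r l) 1)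

lemma contDiffOn_prod' {ι : Type*} (T : Finset ι) (f : ι → (Fin n → ℝ) → ℝ)
    {U : Set (Fin n → ℝ)} (h : ∀ i ∈ T, ContDiffOn ℝ (⊤ : ℕ∞) (f i) U) :
    ContDiffOn ℝ (⊤ : ℕ∞) (fun x => ∏ i ∈ T, f i x) U := by
  classical
  induction T using Finset.induction with
  | empty => simpa using contDiffOn_const
  | insert _ _ hni ih =>
    rename_i a T'
    simp only [Finset.prod_insert hni]
    exact (h a (Finset.mem_insert_self a T')).mul
      (ih (fun i hi => h i (Finset.mem_insert_of_mem hi)))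

/-- Smoothness of `x ↦ A (f x) (g₁ x, …, g_p x)` for a family `A` of alternating
forms smooth on `C`, with `f` smooth mapping `U` into `C`. -/
lemma smooth_apply {A : (Fin n → ℝ) → AlternatingMap ℝ (Fin n → ℝ) ℝ (Fin p)}
    {C U : Set (Fin n → ℝ)}
    (hA : ∀ v : Fin p → (Fin n → ℝ), ContDiffOn ℝ (⊤ : ℕ∞) (fun y => A y v) C)
    {f : (Fin n → ℝ) → (Fin n → ℝ)} (hf : ContDiffOn ℝ (⊤ : ℕ∞) f U)
    (hmaps : Set.MapsTo f U C)
    {g : Fin p → (Fin n → ℝ) → (Fin n → ℝ)} (hg : ∀ l, ContDiffOn ℝ (⊤ : ℕ∞) (g l) U) :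
    ContDiffOn ℝ (⊤ : ℕ∞) (fun x => A (f x) (fun l => g l x)) U := by
  have heq : (fun x => A (f x) (fun l => g l x))
      = fun x => ∑ r : Fin p → Fin n,
          (∏ l, g l x (r l)) • A (f x) (fun l => Pi.single (r l) 1) :=
    funext fun x => alt_expand (A (f x)) (fun l => g l x)
  rw [heq]
  apply ContDiffOn.sum
  intro r _
  have hprod : ContDiffOn ℝ (⊤ : ℕ∞) (fun x => ∏ l, g l x (r l)) U :=
    contDiffOn_prod' Finset.univ _ (fun l _ => (contDiffOn_pi.1 (hg l)) (r l))
  have hcomp : ContDiffOn ℝ (⊤ : ℕ∞) (fun x => A (f x) (fun l => Pi.single (r l) 1)) U :=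
    (hA (fun l => Pi.single (r l) 1)).comp hf hmaps
  simpa [smul_eq_mul] using hprod.mul hcomp

def corr (ξ : Finset (Fin n → ℝ) → (Fin n → ℝ) → AlternatingMap ℝ (Fin n → ℝ) ℝ (Fin p))
    (F : (Fin n → ℝ) → AlternatingMap ℝ (Fin n → ℝ) ℝ (Fin p))
    (t : Finset (Fin n → ℝ)) (x : Fin n → ℝ) : AlternatingMap ℝ (Fin n → ℝ) ℝ (Fin p) :=
  chi (Lam lam t x) •
    ((ξ t (rho lam t x) - F (rho lam t x)).compLinearMap (Pmap lam t x))

lemma corr_apply (ξ F t) (x : Fin n → ℝ) (u : Fin p → (Fin n → ℝ)) :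
    corr lam ξ F t x u = chi (Lam lam t x) *
      (ξ t (rho lam t x) (fun l => Pmap lam t x (u l))
        - F (rho lam t x) (fun l => Pmap lam t x (u l))) := by
  simp [corr, smul_eq_mul]

lemma Lam_contDiff (t : Finset (Fin n → ℝ)) : ContDiff ℝ (⊤ : ℕ∞) (Lam lam t) :=
  ContDiff.sum (fun w _ => affine_contDiff (lam w))

lemma rho_contDiffOn {t : Finset (Fin n → ℝ)} {U : Set (Fin n → ℝ)}
    (hU : ∀ x ∈ U, Lam lam t x ≠ 0) : ContDiffOn ℝ (⊤ : ℕ∞) (rho lam t) U := by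
  unfold rho
  refine ContDiffOn.smul (f := fun x => (Lam lam t x)⁻¹) (g := fun x => ∑ w ∈ t, lam w x • w) ?_ ?_
  · exact ((Lam_contDiff lam t).contDiffOn).inv hU
  · exact ContDiffOn.sum (fun w _ =>
      ((affine_contDiff (lam w)).smul contDiff_const).contDiffOn)

lemma chiLam_contDiff (t : Finset (Fin n → ℝ)) :
    ContDiff ℝ (⊤ : ℕ∞) (fun x => chi (Lam lam t x)) :=
  chi_contDiff.comp (Lam_contDiff lam t)

/-- Smoothness of the correction term on the convex hull of `s`. -/
lemma corr_smooth {s : Finset (Fin n → ℝ)}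
    (hlam : ∀ v ∈ s, ∀ w ∈ s, lam v w = if v = w then 1 else 0)
    {t : Finset (Fin n → ℝ)} (hts : t ⊆ s)
    {ξ : Finset (Fin n → ℝ) → (Fin n → ℝ) → AlternatingMap ℝ (Fin n → ℝ) ℝ (Fin p)}
    {F : (Fin n → ℝ) → AlternatingMap ℝ (Fin n → ℝ) ℝ (Fin p)}
    (hξt : ∀ v, ContDiffOn ℝ (⊤ : ℕ∞) (fun y => ξ t y v) (convexHull ℝ (t : Set (Fin n → ℝ))))
    (hF : ∀ v, ContDiffOn ℝ (⊤ : ℕ∞) (fun y => F y v) (convexHull ℝ (s : Set (Fin n → ℝ))))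
    (u : Fin p → (Fin n → ℝ)) :
    ContDiffOn ℝ (⊤ : ℕ∞) (fun x => corr lam ξ F t x u)
      (convexHull ℝ (s : Set (Fin n → ℝ))) := by
  intro x hx
  rcases lt_or_ge (Lam lam t x) (1/3) with h | h
  · -- the function vanishes in a neighbourhood of `x`
    have hopen : IsOpen {y | Lam lam t y < 1/3} :=
      isOpen_lt (Lam_contDiff lam t).continuous continuous_const
    have hmem : {y | Lam lam t y < 1/3} ∈ nhdsWithin x (convexHull ℝ (s : Set (Fin n → ℝ))) :=
      nhdsWithin_le_nhds (hopen.mem_nhds h)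
    refine (contDiffWithinAt_const (c := 0)).congr_of_eventuallyEq ?_ ?_
    · filter_upwards [hmem] with y hy
      rw [corr_apply, chi_zero (le_of_lt hy), zero_mul]
    · rw [corr_apply, chi_zero (le_of_lt h), zero_mul]
  · -- smooth region `Λ > 1/4`
    set U := convexHull ℝ (s : Set (Fin n → ℝ)) ∩ {y | 1/4 < Lam lam t y} with hUdef
    have hne : ∀ y ∈ U, Lam lam t y ≠ 0 := by
      intro y hy
      have : (1:ℝ)/4 < Lam lam t y := hy.2
      linarith
    have hρ : ContDiffOn ℝ (⊤ : ℕ∞) (rho lam t) U := rho_contDiffOn lam hne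
    have hmaps : Set.MapsTo (rho lam t) U (convexHull ℝ (t : Set (Fin n → ℝ))) := by
      intro y hy
      have hc := coords lam hlam (subset_refl s) hy.1
      refine rho_mem lam (fun v hv => hc.1 v (hts hv)) ?_
      have : (1:ℝ)/4 < Lam lam t y := hy.2
      linarith
    have hg : ∀ l, ContDiffOn ℝ (⊤ : ℕ∞) (fun y => Pmap lam t y (u l)) U := by
      intro l
      have : (fun y => Pmap lam t y (u l))
          = fun y => ∑ w ∈ t, (lam w).linear (u l) • (w - rho lam t y) :=
        funext fun y => Pmap_apply lam t y (u l)
      rw [this]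
      exact ContDiffOn.sum (fun w _ =>
        ((contDiffOn_const.sub hρ).const_smul ((lam w).linear (u l))))
    have h1 : ContDiffOn ℝ (⊤ : ℕ∞)
        (fun y => ξ t (rho lam t y) (fun l => Pmap lam t y (u l))) U :=
      smooth_apply hξt hρ hmaps hg
    have h2 : ContDiffOn ℝ (⊤ : ℕ∞)
        (fun y => F (rho lam t y) (fun l => Pmap lam t y (u l))) U := by
      refine smooth_apply hF hρ ?_ hg
      exact hmaps.mono_right (convexHull_mono (by exact_mod_cast hts))
    have hU : ContDiffOn ℝ (⊤ : ℕ∞) (fun y => corr lam ξ F t y u) U := by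
      have : (fun y => corr lam ξ F t y u)
          = fun y => chi (Lam lam t y) *
              (ξ t (rho lam t y) (fun l => Pmap lam t y (u l))
                - F (rho lam t y) (fun l => Pmap lam t y (u l))) :=
        funext fun y => corr_apply lam ξ F t y u
      rw [this]
      exact ((chiLam_contDiff lam t).contDiffOn).mul (h1.sub h2)
    have hxU : x ∈ U := ⟨hx, by simp only [Set.mem_setOf_eq]; linarith⟩
    refine ContDiffWithinAt.mono_of_mem_nhdsWithin (hU x hxU) ?_
    exact inter_mem_nhdsWithin _
      ((isOpen_lt continuous_const (Lam_contDiff lam t).continuous).mem_nhds hxU.2)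


lemma sum_apply' {ι : Type*} (T : Finset ι)
    (A : ι → AlternatingMap ℝ (Fin n → ℝ) ℝ (Fin p)) (u : Fin p → (Fin n → ℝ)) :
    (∑ t ∈ T, A t) u = ∑ t ∈ T, A t u := by
  classical
  induction T using Finset.induction with
  | empty => simp
  | insert _ _ hni ih => rename_i a T'; simp [Finset.sum_insert hni, ih]

/-- Vanishing of the correction term on faces `t₀` whose interaction with `t`
is already handled. -/
lemma corr_vanish {s : Finset (Fin n → ℝ)}
    (hlam : ∀ v ∈ s, ∀ w ∈ s, lam v w = if v = w then 1 else 0)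
    {t t₀ : Finset (Fin n → ℝ)} (hts : t ⊆ s) (ht₀s : t₀ ⊆ s)
    {ξ : Finset (Fin n → ℝ) → (Fin n → ℝ) → AlternatingMap ℝ (Fin n → ℝ) ℝ (Fin p)}
    {F : (Fin n → ℝ) → AlternatingMap ℝ (Fin n → ℝ) ℝ (Fin p)} {m : ℕ}
    (hco : ∀ q : Finset (Fin n → ℝ), q.Nonempty → q ⊆ t →
      ∀ y ∈ convexHull ℝ (q : Set (Fin n → ℝ)), ∀ v : Fin p → (Fin n → ℝ),
        (∀ l, v l ∈ vectorSpan ℝ (q : Set (Fin n → ℝ))) → ξ q y v = ξ t y v)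
    (hFq : ∀ q : Finset (Fin n → ℝ), q.Nonempty → q ⊆ s → q.card ≤ m →
      ∀ y ∈ convexHull ℝ (q : Set (Fin n → ℝ)), ∀ v : Fin p → (Fin n → ℝ),
        (∀ l, v l ∈ vectorSpan ℝ (q : Set (Fin n → ℝ))) → F y v = ξ q y v)
    (hcard : (t ∩ t₀).card ≤ m)
    {x : Fin n → ℝ} (hx : x ∈ convexHull ℝ (t₀ : Set (Fin n → ℝ)))
    {u : Fin p → (Fin n → ℝ)} (hu : ∀ l, u l ∈ vectorSpan ℝ (t₀ : Set (Fin n → ℝ))) :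
    corr lam ξ F t x u = 0 := by
  classical
  rcases le_or_gt (Lam lam t x) (1/3) with h | h
  · rw [corr_apply, chi_zero h, zero_mul]
  · set q := t ∩ t₀ with hq
    have hc := coords lam hlam ht₀s hx
    have h0t : ∀ v ∈ t, v ∉ t₀ → lam v x = 0 := fun v hv hv' => hc.2.1 v (hts hv) hv'
    obtain ⟨hL, hρ⟩ := rho_restrict lam h0t
    have hqpos : 0 < Lam lam q x := by rw [← hL]; linarith
    have hqne : q.Nonempty := by
      rcases Finset.eq_empty_or_nonempty q with he | hne
      · exfalso; rw [he] at hqpos; simp [Lam] at hqpos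
      · exact hne
    have hqs : q ⊆ s := fun v hv => hts (Finset.mem_inter.1 hv).1
    have hqt : q ⊆ t := Finset.inter_subset_left
    have hqt₀ : q ⊆ t₀ := Finset.inter_subset_right
    have hρmem : rho lam t x ∈ convexHull ℝ (q : Set (Fin n → ℝ)) := by
      rw [hρ]
      exact rho_mem lam (fun v hv => hc.1 v (hqs hv)) hqpos
    have hPmem : ∀ l, Pmap lam t x (u l) ∈ vectorSpan ℝ (q : Set (Fin n → ℝ)) := by
      intro l
      have htan := tangent lam hlam ht₀s (hu l)
      have h0u : ∀ v ∈ t, v ∉ t₀ → (lam v).linear (u l) = 0 :=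
        fun v hv hv' => htan.1 v (hts hv) hv'
      rw [Pmap_restrict lam h0u]
      exact Pmap_mem_vectorSpan hρmem
    rw [corr_apply]
    have e1 : ξ q (rho lam t x) (fun l => Pmap lam t x (u l))
        = ξ t (rho lam t x) (fun l => Pmap lam t x (u l)) :=
      hco q hqne hqt _ hρmem _ hPmem
    have e2 : F (rho lam t x) (fun l => Pmap lam t x (u l))
        = ξ q (rho lam t x) (fun l => Pmap lam t x (u l)) :=
      hFq q hqne hqs hcard _ hρmem _ hPmem
    rw [e2, e1, sub_self, mul_zero]

/-- On its own face, the correction term is exactly the defect `ξ t₀ - F`. -/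
lemma corr_self {s : Finset (Fin n → ℝ)}
    (hlam : ∀ v ∈ s, ∀ w ∈ s, lam v w = if v = w then 1 else 0)
    {t₀ : Finset (Fin n → ℝ)} (ht₀s : t₀ ⊆ s)
    (ξ : Finset (Fin n → ℝ) → (Fin n → ℝ) → AlternatingMap ℝ (Fin n → ℝ) ℝ (Fin p))
    (F : (Fin n → ℝ) → AlternatingMap ℝ (Fin n → ℝ) ℝ (Fin p))
    {x : Fin n → ℝ} (hx : x ∈ convexHull ℝ (t₀ : Set (Fin n → ℝ)))
    {u : Fin p → (Fin n → ℝ)} (hu : ∀ l, u l ∈ vectorSpan ℝ (t₀ : Set (Fin n → ℝ))) :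
    corr lam ξ F t₀ x u = ξ t₀ x u - F x u := by
  have hc := coords lam hlam ht₀s hx
  obtain ⟨hΛ, hρ⟩ := rho_self lam hc.2.2.1 hc.2.2.2
  have hP : (fun l => Pmap lam t₀ x (u l)) = u := by
    funext l
    have htan := tangent lam hlam ht₀s (hu l)
    exact Pmap_self lam hρ htan.2.1 htan.2.2
  rw [corr_apply, hΛ, chi_one, one_mul, hρ, hP]

variable (ξ : Finset (Fin n → ℝ) → (Fin n → ℝ) → AlternatingMap ℝ (Fin n → ℝ) ℝ (Fin p))

/-- The recursive extension: `GG j` agrees with `ξ` on all faces of `s` with at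
most `j` vertices. -/
def GG (s : Finset (Fin n → ℝ)) : ℕ → (Fin n → ℝ) → AlternatingMap ℝ (Fin n → ℝ) ℝ (Fin p)
  | 0 => fun _ => 0
  | (j+1) => fun x => GG s j x +
      ∑ t ∈ s.powerset.filter (fun t => t.card = j + 1), corr lam ξ (GG s j) t x

lemma GG_succ_apply (s : Finset (Fin n → ℝ)) (j : ℕ) (x : Fin n → ℝ)
    (u : Fin p → (Fin n → ℝ)) :
    GG lam ξ s (j+1) x u = GG lam ξ s j x u +
      ∑ t ∈ s.powerset.filter (fun t => t.card = j + 1), corr lam ξ (GG lam ξ s j) t x u := by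
  show (GG lam ξ s j x + ∑ t ∈ _, corr lam ξ (GG lam ξ s j) t x) u = _
  rw [AlternatingMap.add_apply, sum_apply']

/-- Main induction: smoothness and agreement properties of `GG j`. -/
lemma GG_props {s : Finset (Fin n → ℝ)}
    (hlam : ∀ v ∈ s, ∀ w ∈ s, lam v w = if v = w then 1 else 0)
    (hξ1 : ∀ t : Finset (Fin n → ℝ), t ⊂ s → t.Nonempty →
      ∀ v : Fin p → (Fin n → ℝ),
        ContDiffOn ℝ (⊤ : ℕ∞) (fun y => ξ t y v) (convexHull ℝ (t : Set (Fin n → ℝ))))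
    (hξ2 : ∀ q t : Finset (Fin n → ℝ), q.Nonempty → t ⊂ s → t.Nonempty → q ⊆ t →
      ∀ y ∈ convexHull ℝ (q : Set (Fin n → ℝ)), ∀ v : Fin p → (Fin n → ℝ),
        (∀ l, v l ∈ vectorSpan ℝ (q : Set (Fin n → ℝ))) → ξ q y v = ξ t y v)
    (j : ℕ) (hj : j < s.card) :
    (∀ u : Fin p → (Fin n → ℝ),
      ContDiffOn ℝ (⊤ : ℕ∞) (fun x => GG lam ξ s j x u)
        (convexHull ℝ (s : Set (Fin n → ℝ)))) ∧
    (∀ t₀ : Finset (Fin n → ℝ), t₀ ⊆ s → t₀.Nonempty → t₀.card ≤ j →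
      ∀ x ∈ convexHull ℝ (t₀ : Set (Fin n → ℝ)), ∀ u : Fin p → (Fin n → ℝ),
        (∀ l, u l ∈ vectorSpan ℝ (t₀ : Set (Fin n → ℝ))) → GG lam ξ s j x u = ξ t₀ x u) := by
  classical
  induction j with
  | zero =>
    constructor
    · intro u
      simpa [GG] using contDiffOn_const
    · intro t₀ _ ht₀ne hc
      exact absurd (Nat.le_zero.1 hc) (Finset.card_pos.2 ht₀ne).ne'
  | succ j ih =>
    have hj' : j < s.card := Nat.lt_of_succ_lt hj
    obtain ⟨ihS, ihA⟩ := ih hj'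
    -- facts about members of the filter
    have hmemT : ∀ t ∈ s.powerset.filter (fun t => t.card = j + 1),
        t ⊆ s ∧ t.Nonempty ∧ t ⊂ s ∧ t.card = j + 1 := by
      intro t ht
      rw [Finset.mem_filter, Finset.mem_powerset] at ht
      refine ⟨ht.1, Finset.card_pos.1 (by omega), ?_, ht.2⟩
      refine Finset.ssubset_iff_subset_ne.2 ⟨ht.1, ?_⟩
      intro he
      rw [he] at ht
      omega
    constructor
    · -- smoothness
      intro u
      have : (fun x => GG lam ξ s (j+1) x u)
          = fun x => GG lam ξ s j x u +
              ∑ t ∈ s.powerset.filter (fun t => t.card = j + 1),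
                corr lam ξ (GG lam ξ s j) t x u :=
        funext fun x => GG_succ_apply lam ξ s j x u
      rw [this]
      refine (ihS u).add (ContDiffOn.sum ?_)
      intro t ht
      obtain ⟨hts, htne, htss, htc⟩ := hmemT t ht
      exact corr_smooth lam hlam hts (hξ1 t htss htne) ihS u
    · -- agreement
      intro t₀ ht₀s ht₀ne ht₀c x hx u hu
      rw [GG_succ_apply]
      have hcoh : ∀ t : Finset (Fin n → ℝ), t ⊂ s → t.Nonempty →
          ∀ q : Finset (Fin n → ℝ), q.Nonempty → q ⊆ t →
          ∀ y ∈ convexHull ℝ (q : Set (Fin n → ℝ)), ∀ v : Fin p → (Fin n → ℝ),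
            (∀ l, v l ∈ vectorSpan ℝ (q : Set (Fin n → ℝ))) → ξ q y v = ξ t y v :=
        fun t htss htne q hqne hqt => hξ2 q t hqne htss htne hqt
      rcases Nat.lt_or_ge t₀.card (j+1) with hlt | hge
      · -- small face: every correction vanishes
        have h0 : GG lam ξ s j x u = ξ t₀ x u :=
          ihA t₀ ht₀s ht₀ne (Nat.lt_succ_iff.1 hlt) x hx u hu
        have hz : ∀ t ∈ s.powerset.filter (fun t => t.card = j + 1),
            corr lam ξ (GG lam ξ s j) t x u = 0 := by
          intro t ht
          obtain ⟨hts, htne, htss, htc⟩ := hmemT t ht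
          refine corr_vanish lam hlam hts ht₀s (hcoh t htss htne)
            (fun q hq1 hq2 hq3 => ihA q hq2 hq1 hq3) ?_ hx hu
          calc (t ∩ t₀).card ≤ t₀.card := Finset.card_le_card Finset.inter_subset_right
            _ ≤ j := Nat.lt_succ_iff.1 hlt
        rw [Finset.sum_congr rfl hz, Finset.sum_const_zero, add_zero, h0]
      · -- face of the current dimension
        have ht₀c' : t₀.card = j + 1 := le_antisymm ht₀c hge
        have ht₀mem : t₀ ∈ s.powerset.filter (fun t => t.card = j + 1) := by
          rw [Finset.mem_filter, Finset.mem_powerset]; exact ⟨ht₀s, ht₀c'⟩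
        have hsum : ∑ t ∈ s.powerset.filter (fun t => t.card = j + 1),
            corr lam ξ (GG lam ξ s j) t x u
            = corr lam ξ (GG lam ξ s j) t₀ x u := by
          refine Finset.sum_eq_single_of_mem t₀ ht₀mem ?_
          intro t ht htne₀
          obtain ⟨hts, htne, htss, htc⟩ := hmemT t ht
          refine corr_vanish lam hlam hts ht₀s (hcoh t htss htne)
            (fun q hq1 hq2 hq3 => ihA q hq2 hq1 hq3) ?_ hx hu
          have hne : t ∩ t₀ ≠ t₀ := by
            intro he
            have : t₀ ⊆ t := by rw [← he]; exact Finset.inter_subset_left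
            exact htne₀ (Finset.eq_of_subset_of_card_le this (by omega)).symm
          have : t ∩ t₀ ⊂ t₀ := Finset.ssubset_iff_subset_ne.2 ⟨Finset.inter_subset_right, hne⟩
          have := Finset.card_lt_card this
          omega
        rw [hsum, corr_self lam hlam ht₀s ξ (GG lam ξ s j) hx hu]
        ring

end Ext6

/-- every piecewise smooth `p`-form on the boundary complex of an
arbitrary geometric `k`-simplex in `ℝⁿ` (a finite affinely independent set `s`
with `|s| = k + 1 ≥ 2`) extends to a piecewise smooth `p`-form on the full
complex of the simplex. -/
theorem extension_of_forms_boundary_simplex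
    (n k p : ℕ) (hk : 1 ≤ k) (s : Finset (Fin n → ℝ))
    (hs : AffineIndependent ℝ ((↑) : s → (Fin n → ℝ)))
    (hcard : s.card = k + 1)
    (ξ : Finset (Fin n → ℝ) → (Fin n → ℝ) →
      AlternatingMap ℝ (Fin n → ℝ) ℝ (Fin p))
    (hξ : IsPiecewiseSmoothForm n p (boundaryComplex n s) ξ) :
    ∃ ω : Finset (Fin n → ℝ) → (Fin n → ℝ) →
        AlternatingMap ℝ (Fin n → ℝ) ℝ (Fin p),
      IsPiecewiseSmoothForm n p (fullComplex n s) ω ∧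
      ∀ t ∈ boundaryComplex n s, ω t = ξ t := by
  classical
  have hsne : s.Nonempty := Finset.card_pos.1 (by omega)
  obtain ⟨lam, hlam⟩ := Ext6.exists_lam s hs hsne
  have hξ1 : ∀ t : Finset (Fin n → ℝ), t ⊂ s → t.Nonempty →
      ∀ v : Fin p → (Fin n → ℝ),
        ContDiffOn ℝ (⊤ : ℕ∞) (fun y => ξ t y v) (convexHull ℝ (t : Set (Fin n → ℝ))) :=
    fun t htss htne v => hξ.1 t ⟨htss, htne⟩ v
  have hξ2 : ∀ q t : Finset (Fin n → ℝ), q.Nonempty → t ⊂ s → t.Nonempty → q ⊆ t →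
      ∀ y ∈ convexHull ℝ (q : Set (Fin n → ℝ)), ∀ v : Fin p → (Fin n → ℝ),
        (∀ l, v l ∈ vectorSpan ℝ (q : Set (Fin n → ℝ))) → ξ q y v = ξ t y v := by
    intro q t hqne htss htne hqt y hy v hv
    exact hξ.2 q ⟨lt_of_le_of_lt hqt htss, hqne⟩ t ⟨htss, htne⟩ hqt y hy v hv
  have hk' : k < s.card := by omega
  obtain ⟨hS, hA⟩ := Ext6.GG_props lam ξ hlam hξ1 hξ2 k hk'
  refine ⟨fun t => if t = s then Ext6.GG lam ξ s k else ξ t, ⟨?_, ?_⟩, ?_⟩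
  · -- smoothness
    intro t ht v
    obtain ⟨hts, htne⟩ := ht
    by_cases h : t = s
    · subst h
      simpa using hS v
    · simp only [if_neg h]
      exact hξ1 t (Finset.ssubset_iff_subset_ne.2 ⟨hts, h⟩) htne v
  · -- coherence
    intro t ht s' hs' hts' x hx u hu
    obtain ⟨hts, htne⟩ := ht
    obtain ⟨hs's, hs'ne⟩ := hs'
    by_cases h : t = s
    · have h' : s' = s := Finset.Subset.antisymm hs's (h ▸ hts')
      rw [h, h']
    · simp only [if_neg h]
      by_cases h' : s' = s
      · subst h'
        simp only [if_pos rfl]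
        have htc : t.card ≤ k := by
          have := Finset.card_lt_card (Finset.ssubset_iff_subset_ne.2 ⟨hts, h⟩)
          omega
        exact (hA t hts htne htc x hx u hu).symm
      · simp only [if_neg h']
        exact hξ.2 t ⟨Finset.ssubset_iff_subset_ne.2 ⟨hts, h⟩, htne⟩ s'
          ⟨Finset.ssubset_iff_subset_ne.2 ⟨hs's, h'⟩, hs'ne⟩ hts' x hx u hu
  · -- restriction to the boundary
    intro t ht
    exact if_neg (Finset.ssubset_iff_subset_ne.1 ht.1).2
end
end

section
/- Let s ⊆ ℝⁿ be a finite affinely independent set with |s| = k+1 ≥ 2, and let α_v = s \ {v} for v ∈ s denote its k+1 faces of dimension k−1 (cardinality k). Fix p ∈ ℕ, a subset J ⊆ s, and for each v ∈ J a map ξ_v : ℝⁿ → AlternatingMap ℝ ℝⁿ ℝ (Fin p) with ContDiffOn ℝ ⊤ ξ_v (conv (α_v)), such that for all v, w ∈ J with α_v ∩ α_w ≠ ∅, every x ∈ conv (α_v ∩ α_w) and all u_1, …, u_p ∈ vectorSpan ℝ (α_v ∩ α_w), ξ_v x (u_1,…,u_p) = ξ_w x (u_1,…,u_p). Then there exists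 a piecewise smooth p-form ω on Δ(s) such that for every v ∈ J, every x ∈ conv (α_v) and all u_1, …, u_p ∈ vectorSpan ℝ (α_v), ω_{α_v} x (u_1,…,u_p) = ξ_v x (u_1,…,u_p). -/
open Geometry

section Helpers
open Set Finset


lemma contDiffOn_alt_eval {n p : ℕ}
    (F : (Fin n → ℝ) → AlternatingMap ℝ (Fin n → ℝ) ℝ (Fin p))
    {A B : Set (Fin n → ℝ)}
    (hF : ∀ u : Fin p → (Fin n → ℝ), ContDiffOn ℝ (⊤ : ℕ∞) (fun z => F z u) A)
    {g : (Fin n → ℝ) → (Fin n → ℝ)} (hg : ContDiffOn ℝ (⊤ : ℕ∞) g B)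
    (hmap : Set.MapsTo g B A)
    {m : (Fin n → ℝ) → Fin p → (Fin n → ℝ)}
    (hm : ∀ l, ContDiffOn ℝ (⊤ : ℕ∞) (fun x => m x l) B) :
    ContDiffOn ℝ (⊤ : ℕ∞) (fun x => F (g x) (m x)) B := by
  have key : ∀ x, F (g x) (m x) =
      ∑ r ∈ Fintype.piFinset (fun _ : Fin p => (Finset.univ : Finset (Fin n))),
        (∏ l, m x l (r l)) • F (g x) (fun l => (Pi.single (r l) 1 : Fin n → ℝ)) := by
    intro x
    have h1 : m x = fun l => ∑ i : Fin n, (m x l i) • (Pi.single i 1 : Fin n → ℝ) := by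
      funext l
      rw [← Finset.univ_sum_single (m x l)]
      refine Finset.sum_congr rfl fun i _ => ?_
      rw [← Pi.single_smul, smul_eq_mul, mul_one]
      simp
    calc F (g x) (m x)
        = F (g x) (fun l => ∑ i : Fin n, (m x l i) • (Pi.single i 1 : Fin n → ℝ)) := by rw [← h1]
      _ = ∑ r ∈ Fintype.piFinset (fun _ : Fin p => (Finset.univ : Finset (Fin n))),
            F (g x) (fun l => (m x l (r l)) • (Pi.single (r l) 1 : Fin n → ℝ)) :=
          (F (g x)).toMultilinearMap.map_sum_finset _ _
      _ = _ := by
          refine Finset.sum_congr rfl fun r _ => ?_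
          exact (F (g x)).toMultilinearMap.map_smul_univ _ _
  have : (fun x => F (g x) (m x)) = fun x =>
      ∑ r ∈ Fintype.piFinset (fun _ : Fin p => (Finset.univ : Finset (Fin n))),
        (∏ l, m x l (r l)) • F (g x) (fun l => (Pi.single (r l) 1 : Fin n → ℝ)) := funext key
  rw [this]
  apply ContDiffOn.sum
  intro r _
  have h2 : ContDiffOn ℝ (⊤ : ℕ∞) (fun x => F (g x) (fun l => (Pi.single (r l) 1 : Fin n → ℝ))) B :=
    (hF _).comp hg hmap
  have h3 : ContDiffOn ℝ (⊤ : ℕ∞) (fun x => ∏ l, m x l (r l)) B := by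
    apply contDiffOn_prod
    intro l _
    exact (contDiff_apply ℝ ℝ (r l)).comp_contDiffOn (hm l)
  simpa [smul_eq_mul] using h3.mul h2


section Bary

variable {n : ℕ} {tset : Set (Fin n → ℝ)} (b : AffineBasis ↥tset ℝ (Fin n → ℝ))
  (hb : ∀ i : ↥tset, b i = ↑i)
include hb

lemma bary_delta (i j : ↥tset) :
    b.coord i (↑j : Fin n → ℝ) = if (i : Fin n → ℝ) = ↑j then 1 else 0 := by
  classical
  rw [← hb j, b.coord_apply, hb j]
  simp [Subtype.ext_iff]

lemma exists_weights {T : Finset (Fin n → ℝ)} (hT : ↑T ⊆ tset) {x : Fin n → ℝ}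
    (hx : x ∈ convexHull ℝ (↑T : Set (Fin n → ℝ))) :
    ∃ c : (Fin n → ℝ) → ℝ, (∀ w ∈ T, 0 ≤ c w) ∧ (∑ w ∈ T, c w = 1) ∧
      (∑ w ∈ T, c w • w = x) ∧
      ∀ i : ↥tset, b.coord i x = ∑ w ∈ T, c w * (if (i : Fin n → ℝ) = w then 1 else 0) := by
  classical
  rw [Finset.convexHull_eq] at hx
  obtain ⟨c, h0, h1, hcm⟩ := hx
  have hxs : ∑ w ∈ T, c w • w = x := by
    rw [← hcm, Finset.centerMass_eq_of_sum_1 _ _ h1]; rfl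
  refine ⟨c, h0, h1, hxs, fun i => ?_⟩
  have hx2 : x = T.affineCombination ℝ id c := by
    rw [Finset.affineCombination_eq_linear_combination _ _ _ h1, ← hxs]; rfl
  rw [hx2, Finset.map_affineCombination _ _ _ h1,
    Finset.affineCombination_eq_linear_combination _ _ _ h1]
  refine Finset.sum_congr rfl fun w hw => ?_
  rw [smul_eq_mul]
  congr 1
  exact bary_delta b hb i ⟨w, hT hw⟩

lemma coord_eq_zero_of_not_mem {T : Finset (Fin n → ℝ)} (hT : ↑T ⊆ tset) (i : ↥tset)
    (hi : (i : Fin n → ℝ) ∉ T) {x : Fin n → ℝ}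
    (hx : x ∈ convexHull ℝ (↑T : Set (Fin n → ℝ))) : b.coord i x = 0 := by
  obtain ⟨c, -, -, -, hco⟩ := exists_weights b hb hT hx
  rw [hco i]
  refine Finset.sum_eq_zero fun w hw => ?_
  rw [if_neg, mul_zero]
  rintro rfl
  exact hi hw


lemma retract_mem {T : Finset (Fin n → ℝ)} (hT : ↑T ⊆ tset) {w₀ : Fin n → ℝ}
    (i₀ : ↥tset) (hi₀ : (i₀ : Fin n → ℝ) = w₀) {x : Fin n → ℝ}
    (hx : x ∈ convexHull ℝ (↑T : Set (Fin n → ℝ))) (hlt : b.coord i₀ x < 1) :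
    w₀ + (1 - b.coord i₀ x)⁻¹ • (x - w₀) ∈
      convexHull ℝ (↑(T.erase w₀) : Set (Fin n → ℝ)) := by
  classical
  by_cases hw₀ : w₀ ∈ T
  · obtain ⟨c, h0, h1, hxs, hco⟩ := exists_weights b hb hT hx
    set μ := b.coord i₀ x with hμ
    have hμc : μ = c w₀ := by
      rw [hμ, hco i₀]
      rw [Finset.sum_eq_single w₀]
      · rw [if_pos hi₀, mul_one]
      · intro w hw hne
        rw [if_neg (by rw [hi₀]; exact fun h => hne h.symm), mul_zero]
      · exact fun h => absurd hw₀ h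
    have hne : (1 : ℝ) - μ ≠ 0 := by
      intro h
      rw [sub_eq_zero] at h
      exact absurd h.symm (ne_of_lt hlt)
    have hsum : ∑ w ∈ T.erase w₀, c w = 1 - μ := by
      have := Finset.sum_erase_add T c hw₀
      rw [hμc]; linarith [h1, this]
    have hpt : ∑ w ∈ T.erase w₀, ((1 - μ)⁻¹ * c w) • w
        = w₀ + (1 - μ)⁻¹ • (x - w₀) := by
      have hx' : x - w₀ = ∑ w ∈ T.erase w₀, c w • w + (c w₀ - 1) • w₀ := by
        have h₁ := Finset.sum_erase_add T (fun w => c w • w) hw₀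
        rw [← hxs, ← h₁, sub_smul, one_smul]
        abel
      rw [hx', smul_add, smul_smul, Finset.smul_sum]
      have : (1 - μ)⁻¹ * (c w₀ - 1) = -1 := by
        rw [hμc] at hne ⊢
        field_simp
        ring
      rw [this]
      simp only [smul_smul, neg_one_smul]
      abel
    rw [← hpt]
    have hsum1 : ∑ w ∈ T.erase w₀, ((1 - μ)⁻¹ * c w) = 1 := by
      rw [← Finset.mul_sum, hsum, inv_mul_cancel₀ hne]
    have := Finset.centerMass_mem_convexHull (T.erase w₀)
      (w := fun w => (1 - μ)⁻¹ * c w) (z := id)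
      (fun w hw => mul_nonneg (inv_nonneg.2 (by linarith)) (h0 w (Finset.mem_of_mem_erase hw)))
      (by rw [hsum1]; norm_num)
      (fun w hw => Finset.mem_coe.2 hw)
    rw [Finset.centerMass_eq_of_sum_1 _ _ hsum1] at this
    exact this
  · have h0 : b.coord i₀ x = 0 := coord_eq_zero_of_not_mem b hb hT i₀ (hi₀ ▸ hw₀) hx
    rw [h0, Finset.erase_eq_of_notMem hw₀]
    simpa using hx

lemma linear_coord_eq_zero {T : Finset (Fin n → ℝ)} (hT : ↑T ⊆ tset) (i : ↥tset)
    (hi : (i : Fin n → ℝ) ∉ T) {u : Fin n → ℝ}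
    (hu : u ∈ vectorSpan ℝ (↑T : Set (Fin n → ℝ))) : (b.coord i).linear u = 0 := by
  rw [vectorSpan_def] at hu
  induction hu using Submodule.span_induction with
  | mem v hv =>
    obtain ⟨y, hy, z, hz, rfl⟩ := hv
    have hy' : b.coord i y = 0 := by
      rw [show y = (⟨y, hT hy⟩ : ↥tset).1 from rfl, bary_delta b hb i ⟨y, hT hy⟩,
        if_neg (by intro h; exact hi (by rw [h]; exact hy))]
    have hz' : b.coord i z = 0 := by
      rw [show z = (⟨z, hT hz⟩ : ↥tset).1 from rfl, bary_delta b hb i ⟨z, hT hz⟩,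
        if_neg (by intro h; exact hi (by rw [h]; exact hz))]
    rw [AffineMap.linearMap_vsub, hy', hz']
    simp
  | zero => simp
  | add v w _ _ hv hw => rw [map_add, hv, hw, add_zero]
  | smul c v _ hv => rw [map_smul, hv, smul_zero]

lemma mem_vectorSpan_of_coords [Fintype ↥tset] {T : Finset (Fin n → ℝ)}
    (hT : ↑T ⊆ tset) (hTne : T.Nonempty) {u : Fin n → ℝ}
    (hu : ∀ i : ↥tset, (↑i : Fin n → ℝ) ∉ T → (b.coord i).linear u = 0) :
    u ∈ vectorSpan ℝ (↑T : Set (Fin n → ℝ)) := by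
  classical
  obtain ⟨a, ha⟩ := hTne
  have hlin : ∀ (i : ↥tset) (z x : Fin n → ℝ),
      (b.coord i).linear z = b.coord i (z + x) - b.coord i x := by
    intro i z x
    have := (b.coord i).map_vadd x z
    rw [vadd_eq_add] at this
    rw [add_comm z x] at this ⊢
    rw [this, vadd_eq_add]; ring
  have hsum : ∑ i : ↥tset, (b.coord i).linear u = 0 := by
    have h1 := b.sum_coord_apply_eq_one (u + 0)
    have h2 := b.sum_coord_apply_eq_one (0 : Fin n → ℝ)
    calc ∑ i : ↥tset, (b.coord i).linear u
        = ∑ i : ↥tset, (b.coord i (u + 0) - b.coord i 0) := by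
          refine Finset.sum_congr rfl fun i _ => hlin i u 0
      _ = 0 := by rw [Finset.sum_sub_distrib, h1, h2, sub_self]
  have hinj : ∀ z : Fin n → ℝ, (∀ i : ↥tset, (b.coord i).linear z = 0) → z = 0 := by
    intro z hz
    have : z + a = a := by
      refine b.ext_elem fun i => ?_
      have := hlin i z a
      rw [hz i] at this
      linarith
    simpa using congrArg (fun y => y - a) this
  have key : u = ∑ i : ↥tset, ((b.coord i).linear u) • ((i : Fin n → ℝ) - a) := by
    have hz : ∀ j : ↥tset, (b.coord j).linear
        (u - ∑ i : ↥tset, ((b.coord i).linear u) • ((i : Fin n → ℝ) - a)) = 0 := by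
      intro j
      rw [map_sub, map_sum]
      have hterm : ∀ i : ↥tset, (b.coord j).linear (((b.coord i).linear u) • ((i : Fin n → ℝ) - a))
          = ((b.coord i).linear u) * ((if j = i then 1 else 0) - b.coord j a) := by
        intro i
        rw [map_smul, smul_eq_mul]
        congr 1
        rw [show (i : Fin n → ℝ) - a = (i : Fin n → ℝ) -ᵥ a from rfl,
          AffineMap.linearMap_vsub]
        rw [show ((i : Fin n → ℝ)) = b i from (hb i).symm, b.coord_apply]
        rfl
      rw [Finset.sum_congr rfl (fun i _ => hterm i)]
      have : ∑ i : ↥tset, ((b.coord i).linear u) * ((if j = i then 1 else 0) - b.coord j a)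
          = (∑ i : ↥tset, ((b.coord i).linear u) * (if j = i then 1 else 0))
            - (∑ i : ↥tset, ((b.coord i).linear u)) * b.coord j a := by
        rw [Finset.sum_mul, ← Finset.sum_sub_distrib]
        refine Finset.sum_congr rfl fun i _ => by ring
      rw [this, hsum, zero_mul, sub_zero]
      simp [mul_ite, Finset.sum_ite_eq]
    exact (sub_eq_zero.mp (hinj _ hz)).symm.symm
  rw [key]
  refine Submodule.sum_mem _ fun i _ => ?_
  by_cases hiT : (i : Fin n → ℝ) ∈ T
  · refine Submodule.smul_mem _ _ ?_
    have := vsub_mem_vectorSpan ℝ (Set.mem_of_mem_of_subset (Finset.mem_coe.2 hiT) subset_rfl)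
      (Finset.mem_coe.2 ha)
    exact this
  · rw [hu i hiT, zero_smul]
    exact Submodule.zero_mem _

end Bary


theorem glue_construction
    (n p : ℕ) (s : Finset (Fin n → ℝ))
    (hs : AffineIndependent ℝ ((↑) : s → (Fin n → ℝ)))
    (J : Finset (Fin n → ℝ)) (hJ : J ⊆ s)
    (ξ : (Fin n → ℝ) → (Fin n → ℝ) → AlternatingMap ℝ (Fin n → ℝ) ℝ (Fin p))
    (hsmooth : ∀ v ∈ J, ∀ u : Fin p → (Fin n → ℝ),
      ContDiffOn ℝ (⊤ : ℕ∞) (fun x => ξ v x u)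
        (convexHull ℝ ((s.erase v : Finset (Fin n → ℝ)) : Set (Fin n → ℝ))))
    (hcompat : ∀ v ∈ J, ∀ w ∈ J, (↑(s.erase v ∩ s.erase w) : Set (Fin n → ℝ)).Nonempty →
      ∀ x ∈ convexHull ℝ (↑(s.erase v ∩ s.erase w) : Set (Fin n → ℝ)),
      ∀ u : Fin p → (Fin n → ℝ),
        (∀ l : Fin p, u l ∈ vectorSpan ℝ (↑(s.erase v ∩ s.erase w) : Set (Fin n → ℝ))) →
          ξ v x u = ξ w x u) :
    ∃ Ω : (Fin n → ℝ) → AlternatingMap ℝ (Fin n → ℝ) ℝ (Fin p),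
      (∀ u, ContDiffOn ℝ (⊤ : ℕ∞) (fun x => Ω x u)
        (convexHull ℝ (↑s : Set (Fin n → ℝ)))) ∧
      ∀ v ∈ J, ∀ x ∈ convexHull ℝ ((s.erase v : Finset (Fin n → ℝ)) : Set (Fin n → ℝ)),
        ∀ u : Fin p → (Fin n → ℝ),
          (∀ l : Fin p, u l ∈ vectorSpan ℝ ((s.erase v : Finset (Fin n → ℝ)) : Set (Fin n → ℝ))) →
            Ω x u = ξ v x u := by
  classical
  have hs' : AffineIndependent ℝ ((↑) : (↑s : Set (Fin n → ℝ)) → (Fin n → ℝ)) := hs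
  obtain ⟨tset, hst, htind, htspan⟩ := exists_subset_affineIndependent_affineSpan_eq_top hs'
  have htfin : tset.Finite := finite_set_of_fin_dim_affineIndependent ℝ htind
  haveI : Fintype ↥tset := htfin.fintype
  let b : AffineBasis ↥tset ℝ (Fin n → ℝ) :=
    ⟨(↑), htind, by rw [Subtype.range_coe]; exact htspan⟩
  have hb : ∀ i : ↥tset, b i = ↑i := fun i => rfl
  revert hJ hsmooth hcompat
  induction J using Finset.induction_on with
  | empty =>
    intro _ _ _
    refine ⟨fun _ => 0, fun u => ?_, by simp⟩
    simpa using contDiffOn_const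
  | @insert w₀ J' hw₀J' ih =>
    intro hJ hsmooth hcompat
    obtain ⟨Ω, hΩs, hΩ⟩ := ih
      (fun y hy => hJ (Finset.mem_insert_of_mem hy))
      (fun v hv u => hsmooth v (Finset.mem_insert_of_mem hv) u)
      (fun v hv w hw => hcompat v (Finset.mem_insert_of_mem hv) w (Finset.mem_insert_of_mem hw))
    have hw₀J : w₀ ∈ insert w₀ J' := Finset.mem_insert_self _ _
    have hw₀s : w₀ ∈ s := hJ hw₀J
    have hw₀t : w₀ ∈ tset := hst hw₀s
    set i₀ : ↥tset := (⟨w₀, hw₀t⟩ : ↥tset) with hi₀def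
    have hi₀ : (i₀ : Fin n → ℝ) = w₀ := rfl
    have hErase_sub : ∀ v : Fin n → ℝ, (↑(s.erase v) : Set (Fin n → ℝ)) ⊆ tset :=
      fun v => Subset.trans (Finset.coe_subset.2 (Finset.erase_subset _ _)) hst
    have hs_sub : (↑s : Set (Fin n → ℝ)) ⊆ tset := hst
    have hlinCD : ContDiff ℝ (⊤ : ℕ∞) ((b.coord i₀).linear) := by
      have := ContinuousLinearMap.contDiff (n := ((⊤ : ℕ∞) : WithTop ℕ∞))
        (LinearMap.toContinuousLinearMap ((b.coord i₀).linear))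
      rwa [LinearMap.coe_toContinuousLinearMap'] at this
    have hcoordCD : ContDiff ℝ (⊤ : ℕ∞) (b.coord i₀) := by
      rw [AffineMap.decomp (b.coord i₀)]
      exact hlinCD.add contDiff_const
    set lam : (Fin n → ℝ) → ℝ := fun x => b.coord i₀ x with hlam
    set lin : (Fin n → ℝ) →ₗ[ℝ] ℝ := (b.coord i₀).linear with hlin
    set aa : (Fin n → ℝ) → ℝ := fun x => (1 - lam x)⁻¹ with haa
    set r : (Fin n → ℝ) → (Fin n → ℝ) := fun x => w₀ + aa x • (x - w₀) with hr
    set χ : (Fin n → ℝ) → ℝ := fun x => Real.smoothTransition (1 - 3 * lam x) with hχ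
    set D : (Fin n → ℝ) → AlternatingMap ℝ (Fin n → ℝ) ℝ (Fin p) :=
      fun z => ξ w₀ z - Ω z with hD
    set dr : (Fin n → ℝ) → (Fin n → ℝ) →ₗ[ℝ] (Fin n → ℝ) := fun x =>
      aa x • LinearMap.id + (aa x ^ 2) • (lin.smulRight (x - w₀)) with hdr
    have hdra : ∀ x w, dr x w = aa x • w + (aa x ^ 2 * lin w) • (x - w₀) := by
      intro x w
      simp [hdr, LinearMap.smulRight_apply, smul_smul]
    have happly : ∀ x u, (Ω x + χ x • ((D (r x)).compLinearMap (dr x))) u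
        = Ω x u + χ x * (D (r x) (fun l => dr x (u l))) := by
      intro x u
      simp [AlternatingMap.add_apply, AlternatingMap.smul_apply,
        AlternatingMap.compLinearMap_apply, smul_eq_mul]
    have hsublin : ∀ (j : ↥tset) (x : Fin n → ℝ),
        (b.coord j).linear (x - w₀) = b.coord j x - b.coord j w₀ := fun j x => by
      rw [show x - w₀ = x -ᵥ w₀ from rfl, AffineMap.linearMap_vsub]; rfl
    have hcw₀ : b.coord i₀ w₀ = 1 := by
      rw [show w₀ = ((i₀ : ↥tset) : Fin n → ℝ) from rfl, bary_delta b hb i₀ i₀, if_pos rfl]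
    refine ⟨fun x => Ω x + χ x • ((D (r x)).compLinearMap (dr x)), ?_, ?_⟩
    · -- smoothness
      intro u
      have heq : (fun x => (Ω x + χ x • ((D (r x)).compLinearMap (dr x))) u)
          = fun x => Ω x u + χ x * (D (r x) (fun l => dr x (u l))) :=
        funext fun x => happly x u
      rw [heq]
      apply (hΩs u).add
      intro x hx
      rcases lt_or_ge (lam x) (1/2 : ℝ) with hx2 | hx2
      · have hU : IsOpen {y : Fin n → ℝ | lam y < 1/2} :=
          isOpen_lt hcoordCD.continuous continuous_const
        have hCD : ContDiffOn ℝ (⊤ : ℕ∞) (fun x => χ x * (D (r x) (fun l => dr x (u l))))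
            (convexHull ℝ (↑s : Set (Fin n → ℝ)) ∩ {y | lam y < 1/2}) := by
          have hne' : ∀ y ∈ convexHull ℝ (↑s : Set (Fin n → ℝ)) ∩ {y | lam y < 1/2},
              (1 : ℝ) - lam y ≠ 0 := by
            intro y hy h
            rw [sub_eq_zero] at h
            have h2 := hy.2
            simp only [Set.mem_setOf_eq] at h2
            linarith [h.symm]
          have haCD : ContDiffOn ℝ (⊤ : ℕ∞) aa
              (convexHull ℝ (↑s : Set (Fin n → ℝ)) ∩ {y | lam y < 1/2}) :=
            ((contDiff_const.sub hcoordCD).contDiffOn).inv hne'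
          have hrCD : ContDiffOn ℝ (⊤ : ℕ∞) r
              (convexHull ℝ (↑s : Set (Fin n → ℝ)) ∩ {y | lam y < 1/2}) :=
            contDiffOn_const.add (haCD.smul ((contDiff_id.sub contDiff_const).contDiffOn))
          have hrmaps : Set.MapsTo r (convexHull ℝ (↑s : Set (Fin n → ℝ)) ∩ {y | lam y < 1/2})
              (convexHull ℝ (↑(s.erase w₀) : Set (Fin n → ℝ))) := by
            intro y hy
            have h2 := hy.2
            simp only [Set.mem_setOf_eq] at h2
            exact retract_mem b hb hs_sub i₀ hi₀ hy.1 (by linarith)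
          have hFD : ∀ u' : Fin p → (Fin n → ℝ), ContDiffOn ℝ (⊤ : ℕ∞) (fun z => D z u')
              (convexHull ℝ (↑(s.erase w₀) : Set (Fin n → ℝ))) := by
            intro u'
            have h1 := hsmooth w₀ hw₀J u'
            have h2 := (hΩs u').mono
              (convexHull_mono (Finset.coe_subset.2 (Finset.erase_subset w₀ s)))
            simpa [hD, AlternatingMap.sub_apply] using h1.sub h2
          have hmCD : ∀ l, ContDiffOn ℝ (⊤ : ℕ∞) (fun x => dr x (u l))
              (convexHull ℝ (↑s : Set (Fin n → ℝ)) ∩ {y | lam y < 1/2}) := by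
            intro l
            have heq2 : (fun x => dr x (u l))
                = fun x => aa x • u l + (aa x ^ 2 * lin (u l)) • (x - w₀) :=
              funext fun x => hdra x (u l)
            rw [heq2]
            refine (haCD.smul contDiffOn_const).add ?_
            exact (((haCD.pow 2).mul contDiffOn_const).smul
              ((contDiff_id.sub contDiff_const).contDiffOn))
          have hχCD : ContDiffOn ℝ (⊤ : ℕ∞) χ
              (convexHull ℝ (↑s : Set (Fin n → ℝ)) ∩ {y | lam y < 1/2}) :=
            (Real.smoothTransition.contDiff.comp
              (contDiff_const.sub (contDiff_const.mul hcoordCD))).contDiffOn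
          exact hχCD.mul (contDiffOn_alt_eval D hFD hrCD hrmaps hmCD)
        exact (contDiffWithinAt_inter (hU.mem_nhds hx2)).mp (hCD x ⟨hx, hx2⟩)
      · have hU : IsOpen {y : Fin n → ℝ | 1/3 < lam y} :=
          isOpen_lt continuous_const hcoordCD.continuous
        have hzero : ∀ y ∈ convexHull ℝ (↑s : Set (Fin n → ℝ)) ∩ {y | 1/3 < lam y},
            χ y * (D (r y) (fun l => dr y (u l))) = 0 := by
          intro y hy
          have h2 := hy.2
          simp only [Set.mem_setOf_eq] at h2
          have hzy : χ y = 0 := Real.smoothTransition.zero_of_nonpos (by linarith)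
          rw [hzy, zero_mul]
        have hCD : ContDiffOn ℝ (⊤ : ℕ∞) (fun x => χ x * (D (r x) (fun l => dr x (u l))))
            (convexHull ℝ (↑s : Set (Fin n → ℝ)) ∩ {y | 1/3 < lam y}) :=
          (contDiffOn_const (c := (0:ℝ))).congr hzero
        have hmem : x ∈ {y : Fin n → ℝ | 1/3 < lam y} := by
          simp only [Set.mem_setOf_eq]; linarith
        exact (contDiffWithinAt_inter (hU.mem_nhds hmem)).mp (hCD x ⟨hx, hmem⟩)
    · -- restriction property
      intro v hv x hx u hu
      rcases Finset.mem_insert.mp hv with rfl | hvJ'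
      · -- v = w₀
        have hlam0 : lam x = 0 :=
          coord_eq_zero_of_not_mem b hb (hErase_sub v) i₀ (Finset.notMem_erase _ _) hx
        have hχ1 : χ x = 1 :=
          Real.smoothTransition.one_of_one_le (by rw [hlam0]; norm_num)
        have haax : aa x = 1 := by rw [haa]; simp [hlam0]
        have hrx : r x = x := by
          rw [hr]; simp only [haax, one_smul]; abel
        have hdrx : (fun l => dr x (u l)) = u := funext fun l => by
          rw [hdra x (u l), haax]
          have hl0 : lin (u l) = 0 :=
            linear_coord_eq_zero b hb (hErase_sub v) i₀ (Finset.notMem_erase _ _) (hu l)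
          rw [hl0]
          simp
        have hDx : D x u = ξ v x u - Ω x u := by simp [hD]
        rw [happly, hχ1, hrx, hdrx, one_mul, hDx]
        ring
      · -- v ∈ J'
        have hvJ : v ∈ insert w₀ J' := Finset.mem_insert_of_mem hvJ'
        have hvs : v ∈ s := hJ hvJ
        have hΩx : Ω x u = ξ v x u := hΩ v hvJ' x hx u hu
        rw [happly, hΩx]
        suffices hcz : χ x * D (r x) (fun l => dr x (u l)) = 0 by rw [hcz, add_zero]
        rcases le_or_gt (1/3 : ℝ) (lam x) with h13 | h13
        · rw [show χ x = 0 from Real.smoothTransition.zero_of_nonpos (by linarith), zero_mul]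
        · have hvw : v ≠ w₀ := fun h => hw₀J' (h ▸ hvJ')
          have hlt1 : lam x < 1 := by linarith
          set T₂ : Finset (Fin n → ℝ) := (s.erase v).erase w₀ with hT₂
          have hT₂sub_s : T₂ ⊆ s :=
            Finset.Subset.trans (Finset.erase_subset _ _) (Finset.erase_subset _ _)
          have hT₂t : (↑T₂ : Set (Fin n → ℝ)) ⊆ tset :=
            Subset.trans (Finset.coe_subset.2 hT₂sub_s) hst
          have hz : r x ∈ convexHull ℝ (↑T₂ : Set (Fin n → ℝ)) :=
            retract_mem b hb (hErase_sub v) i₀ hi₀ hx hlt1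
          have hT₂ne_set : (↑T₂ : Set (Fin n → ℝ)).Nonempty := by
            rcases Set.eq_empty_or_nonempty (↑T₂ : Set (Fin n → ℝ)) with h | h
            · rw [h, convexHull_empty] at hz; exact absurd hz (Set.notMem_empty _)
            · exact h
          have hT₂ne : T₂.Nonempty := Finset.coe_nonempty.mp hT₂ne_set
          have hxw₀ : x - w₀ ∈ vectorSpan ℝ (↑s : Set (Fin n → ℝ)) := by
            have hx' : x ∈ affineSpan ℝ (↑s : Set (Fin n → ℝ)) := by
              have h1 : x ∈ affineSpan ℝ (↑(s.erase v) : Set (Fin n → ℝ)) :=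
                convexHull_subset_affineSpan _ hx
              exact affineSpan_mono ℝ (Finset.coe_subset.2 (Finset.erase_subset _ _)) h1
            have hw' : w₀ ∈ affineSpan ℝ (↑s : Set (Fin n → ℝ)) :=
              mem_affineSpan ℝ (Finset.mem_coe.2 hw₀s)
            have h2 := AffineSubspace.vsub_mem_direction hx' hw'
            rwa [direction_affineSpan, vsub_eq_sub] at h2
          have hu' : ∀ l, dr x (u l) ∈ vectorSpan ℝ (↑T₂ : Set (Fin n → ℝ)) := by
            intro l
            apply mem_vectorSpan_of_coords b hb hT₂t hT₂ne
            intro i hiT₂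
            rw [hdra x (u l), map_add, map_smul, map_smul]
            by_cases his : (i : Fin n → ℝ) ∈ s
            · have hvcase : (i : Fin n → ℝ) = v ∨ (i : Fin n → ℝ) = w₀ := by
                by_contra hcon
                push_neg at hcon
                exact hiT₂ (Finset.mem_erase.2 ⟨hcon.2, Finset.mem_erase.2 ⟨hcon.1, his⟩⟩)
              rcases hvcase with hiv | hiw
              · have h1 : (b.coord i).linear (u l) = 0 :=
                  linear_coord_eq_zero b hb (hErase_sub v) i
                    (by rw [hiv]; exact Finset.notMem_erase _ _) (hu l)
                have h2 : b.coord i x = 0 :=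
                  coord_eq_zero_of_not_mem b hb (hErase_sub v) i
                    (by rw [hiv]; exact Finset.notMem_erase _ _) hx
                have h3 : b.coord i w₀ = 0 := by
                  rw [show w₀ = ((i₀ : ↥tset) : Fin n → ℝ) from rfl, bary_delta b hb i i₀,
                    if_neg (by rw [hiv, hi₀]; exact hvw)]
                rw [hsublin, h1, h2, h3]
                simp
              · have hii₀ : i = i₀ := Subtype.ext (by rw [hiw, hi₀])
                rw [hii₀, hsublin i₀ x, hcw₀, ← hlin]
                have hnz : (1 : ℝ) - lam x ≠ 0 := by
                  intro h; rw [sub_eq_zero] at h; linarith [h.symm]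
                have hlamx : b.coord i₀ x = lam x := rfl
                rw [hlamx]
                simp only [haa, smul_eq_mul]
                field_simp
                ring
            · have h1 : (b.coord i).linear (u l) = 0 :=
                linear_coord_eq_zero b hb (hErase_sub v) i
                  (fun hmem => his (Finset.mem_of_mem_erase hmem)) (hu l)
              have h2 : (b.coord i).linear (x - w₀) = 0 :=
                linear_coord_eq_zero b hb hs_sub i his hxw₀
              rw [h1, h2]
              simp
          have hmemv : r x ∈ convexHull ℝ (↑(s.erase v) : Set (Fin n → ℝ)) :=
            convexHull_mono (Finset.coe_subset.2 (Finset.erase_subset _ _)) hz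
          have huv2 : ∀ l, dr x (u l) ∈ vectorSpan ℝ (↑(s.erase v) : Set (Fin n → ℝ)) :=
            fun l => vectorSpan_mono ℝ (Finset.coe_subset.2 (Finset.erase_subset _ _)) (hu' l)
          have hΩz : Ω (r x) (fun l => dr x (u l)) = ξ v (r x) (fun l => dr x (u l)) :=
            hΩ v hvJ' _ hmemv _ huv2
          have hinter : s.erase v ∩ s.erase w₀ = T₂ := by
            ext y
            simp only [Finset.mem_inter, Finset.mem_erase, hT₂]
            tauto
          have hne2 : Set.Nonempty (↑(s.erase v ∩ s.erase w₀) : Set (Fin n → ℝ)) := by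
            rw [hinter]
            exact hT₂ne_set
          have hz2 : r x ∈ convexHull ℝ (↑(s.erase v ∩ s.erase w₀) : Set (Fin n → ℝ)) := by
            rw [hinter]; exact hz
          have hu2 : ∀ l, dr x (u l) ∈ vectorSpan ℝ (↑(s.erase v ∩ s.erase w₀) : Set (Fin n → ℝ)) :=
            fun l => by rw [hinter]; exact hu' l
          have hcompat' := hcompat v hvJ w₀ hw₀J hne2 (r x) hz2 (fun l => dr x (u l)) hu2
          have hDz : D (r x) (fun l => dr x (u l)) = 0 := by
            have h1 : D (r x) (fun l => dr x (u l))
                = ξ w₀ (r x) (fun l => dr x (u l)) - Ω (r x) (fun l => dr x (u l)) := by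
              simp [hD]
            rw [h1, hΩz, ← hcompat', sub_self]
          rw [hDz, mul_zero]

end Helpers

/-- let `s` be a geometric `k`-simplex in `ℝⁿ` (`|s| = k + 1 ≥ 2`)
with codimension-one faces `α_v = s \ {v}` for `v ∈ s`.  Given, for each vertex
`v` in a subset `J ⊆ s`, a `p`-form `ξ v` smooth on `conv (α_v)`, such that any
two of them agree on the intersection of the corresponding faces (whenever
nonempty, at points of `conv (α_v ∩ α_w)` on vectors of `vectorSpan (α_v ∩ α_w)`),
there is a piecewise smooth `p`-form `ω` on the full complex of `s` restricting
to `ξ v` on each face `α_v`, `v ∈ J`. -/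
theorem extension_of_forms_partial_boundary
    (n k p : ℕ) (hk : 1 ≤ k) (s : Finset (Fin n → ℝ))
    (hs : AffineIndependent ℝ ((↑) : s → (Fin n → ℝ)))
    (hcard : s.card = k + 1)
    (J : Finset (Fin n → ℝ)) (hJ : J ⊆ s)
    (ξ : (Fin n → ℝ) → (Fin n → ℝ) → AlternatingMap ℝ (Fin n → ℝ) ℝ (Fin p))
    (hsmooth : ∀ v ∈ J, ∀ u : Fin p → (Fin n → ℝ),
      ContDiffOn ℝ (⊤ : ℕ∞) (fun x => ξ v x u)
        (convexHull ℝ ((s.erase v : Finset (Fin n → ℝ)) : Set (Fin n → ℝ))))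
    (hcompat : ∀ v ∈ J, ∀ w ∈ J, (↑(s.erase v ∩ s.erase w) : Set (Fin n → ℝ)).Nonempty →
      ∀ x ∈ convexHull ℝ (↑(s.erase v ∩ s.erase w) : Set (Fin n → ℝ)),
      ∀ u : Fin p → (Fin n → ℝ),
        (∀ l : Fin p, u l ∈ vectorSpan ℝ (↑(s.erase v ∩ s.erase w) : Set (Fin n → ℝ))) →
          ξ v x u = ξ w x u) :
    ∃ ω : Finset (Fin n → ℝ) → (Fin n → ℝ) →
        AlternatingMap ℝ (Fin n → ℝ) ℝ (Fin p),
      IsPiecewiseSmoothForm n p (fullComplex n s) ω ∧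
      ∀ v ∈ J, ∀ x ∈ convexHull ℝ ((s.erase v : Finset (Fin n → ℝ)) : Set (Fin n → ℝ)),
        ∀ u : Fin p → (Fin n → ℝ),
          (∀ l : Fin p, u l ∈ vectorSpan ℝ ((s.erase v : Finset (Fin n → ℝ)) : Set (Fin n → ℝ))) →
            ω (s.erase v) x u = ξ v x u := by
  obtain ⟨Ω, hΩs, hΩ⟩ := glue_construction n p s hs J hJ ξ hsmooth hcompat
  refine ⟨fun _ => Ω, ⟨?_, ?_⟩, ?_⟩
  · intro t ht u
    exact (hΩs u).mono (convexHull_mono (Finset.coe_subset.2 ht.1))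
  · intro t _ s' _ _ x _ u _
    rfl
  · intro v hv x hx u hu
    exact hΩ v hv x hx u hu
end

section
/- Let K be a finite geometric simplicial complex in ℝⁿ and L a subcomplex of K, and fix p ∈ ℕ. Then every piecewise smooth p-form ξ on L extends to a piecewise smooth p-form ω on K with ω|L = ξ. (General extension lemma for piecewise smooth forms.) -/
open Geometry

section PSFAux
open Finset

namespace PSFExt

variable {n p : ℕ}

/-- Spec for barycentric-coordinate affine functionals of a finset `s`. -/
def lamSpec (s : Finset (Fin n → ℝ)) (f : (Fin n → ℝ) → ((Fin n → ℝ) →ᵃ[ℝ] ℝ)) : Prop :=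
  ∀ v ∈ s, ∀ w ∈ s, f v w = if w = v then 1 else 0

open scoped Classical in
noncomputable def lam (s : Finset (Fin n → ℝ)) : (Fin n → ℝ) → ((Fin n → ℝ) →ᵃ[ℝ] ℝ) :=
  if h : ∃ f, lamSpec s f then h.choose else fun _ => 0

lemma lamSpec_exists {s : Finset (Fin n → ℝ)}
    (hs : AffineIndependent ℝ ((↑) : s → (Fin n → ℝ))) : ∃ f, lamSpec s f := by
  have hset : AffineIndependent ℝ ((↑) : (↑s : Set (Fin n → ℝ)) → (Fin n → ℝ)) := hs
  obtain ⟨t, hst, hti, htsp⟩ := exists_subset_affineIndependent_affineSpan_eq_top hset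
  have htsp' : affineSpan ℝ (Set.range ((↑) : t → (Fin n → ℝ))) = ⊤ := by
    rwa [Subtype.range_coe]
  let b : AffineBasis t ℝ (Fin n → ℝ) := ⟨(↑), hti, htsp'⟩
  classical
  refine ⟨fun v => if h : v ∈ t then b.coord ⟨v, h⟩ else 0, ?_⟩
  intro v hv w hw
  have hvt : v ∈ t := hst hv
  have hwt : w ∈ t := hst hw
  dsimp only
  rw [dif_pos hvt]
  have hco : b.coord ⟨v, hvt⟩ w = if (⟨v, hvt⟩ : t) = ⟨w, hwt⟩ then 1 else 0 :=
    b.coord_apply (⟨v, hvt⟩ : t) (⟨w, hwt⟩ : t)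
  rw [hco]
  simp only [Subtype.mk.injEq]
  rcases eq_or_ne w v with h | h
  · subst h; simp
  · rw [if_neg (fun e => h e.symm), if_neg h]

lemma lam_spec {s : Finset (Fin n → ℝ)}
    (hs : AffineIndependent ℝ ((↑) : s → (Fin n → ℝ))) : lamSpec s (lam s) := by
  rw [lam]
  rw [dif_pos (lamSpec_exists hs)]
  exact (lamSpec_exists hs).choose_spec

/-- A chosen point of a finset. -/
noncomputable def pt (t₀ : Finset (Fin n → ℝ)) : Fin n → ℝ :=
  if h : t₀.Nonempty then h.choose else 0

lemma pt_mem {t₀ : Finset (Fin n → ℝ)} (h : t₀.Nonempty) : pt t₀ ∈ t₀ := by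
  rw [pt, dif_pos h]; exact h.choose_spec

/-- Affine map applied to an affine combination. -/
lemma aff_combo (f : (Fin n → ℝ) →ᵃ[ℝ] ℝ) (T : Finset (Fin n → ℝ)) (μ : (Fin n → ℝ) → ℝ)
    (h1 : ∑ w ∈ T, μ w = 1) :
    f (∑ w ∈ T, μ w • w) = ∑ w ∈ T, μ w * f w := by
  have hd : ∀ y, f y = f.linear y + f 0 := fun y => congrFun f.decomp y
  rw [hd]
  have : f.linear (∑ w ∈ T, μ w • w) = ∑ w ∈ T, μ w * f.linear w := by
    rw [map_sum]; exact Finset.sum_congr rfl fun w _ => by rw [map_smul, smul_eq_mul]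
  rw [this]
  have : ∀ w ∈ T, μ w * f w = μ w * f.linear w + μ w * f 0 := by
    intro w _; rw [hd w]; ring
  rw [Finset.sum_congr rfl this, Finset.sum_add_distrib, ← Finset.sum_mul, h1, one_mul]

/-- Linear part of affine map applied to a null combination. -/
lemma lin_combo (f : (Fin n → ℝ) →ᵃ[ℝ] ℝ) (T : Finset (Fin n → ℝ)) (μ : (Fin n → ℝ) → ℝ)
    (h0 : ∑ w ∈ T, μ w = 0) :
    f.linear (∑ w ∈ T, μ w • w) = ∑ w ∈ T, μ w * f w := by
  have hd : ∀ y, (f y : ℝ) = f.linear y + f 0 := fun y => congrFun f.decomp y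
  have : f.linear (∑ w ∈ T, μ w • w) = ∑ w ∈ T, μ w * f.linear w := by
    rw [map_sum]; exact Finset.sum_congr rfl fun w _ => by rw [map_smul, smul_eq_mul]
  rw [this]
  have : ∀ w ∈ T, μ w * f w = μ w * f.linear w + μ w * f 0 := by
    intro w _; rw [hd w]; ring
  rw [Finset.sum_congr rfl this, Finset.sum_add_distrib, ← Finset.sum_mul, h0, zero_mul, add_zero]

lemma lam_eval {s : Finset (Fin n → ℝ)} (hlam : lamSpec s (lam s))
    {t' : Finset (Fin n → ℝ)} (ht' : t' ⊆ s) (μ : (Fin n → ℝ) → ℝ)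
    (h1 : ∑ w ∈ t', μ w = 1) {v : Fin n → ℝ} (hv : v ∈ s) :
    lam s v (∑ w ∈ t', μ w • w) = if v ∈ t' then μ v else 0 := by
  classical
  rw [aff_combo _ _ _ h1]
  have : ∀ w ∈ t', μ w * lam s v w = if w = v then μ w else 0 := by
    intro w hw
    rw [hlam v hv w (ht' hw)]
    by_cases h : w = v <;> simp [h]
  rw [Finset.sum_congr rfl this, Finset.sum_ite_eq' t' v μ]

lemma lam_lin_eval {s : Finset (Fin n → ℝ)} (hlam : lamSpec s (lam s))
    {t' : Finset (Fin n → ℝ)} (ht' : t' ⊆ s) (μ : (Fin n → ℝ) → ℝ)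
    (h0 : ∑ w ∈ t', μ w = 0) {v : Fin n → ℝ} (hv : v ∈ s) :
    (lam s v).linear (∑ w ∈ t', μ w • w) = if v ∈ t' then μ v else 0 := by
  classical
  rw [lin_combo _ _ _ h0]
  have : ∀ w ∈ t', μ w * lam s v w = if w = v then μ w else 0 := by
    intro w hw
    rw [hlam v hv w (ht' hw)]
    by_cases h : w = v <;> simp [h]
  rw [Finset.sum_congr rfl this, Finset.sum_ite_eq' t' v μ]


section Proj
variable {n p : ℕ}

/-- Affine projection collapsing `s`-coordinates outside `t` to the basepoint of `t₀`. -/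
noncomputable def projP (s t₀ t : Finset (Fin n → ℝ)) (x : Fin n → ℝ) : Fin n → ℝ :=
  x - ∑ v ∈ s \ t, lam s v x • (v - pt t₀)

/-- Linear version of `projP`. -/
noncomputable def projL (s t₀ t : Finset (Fin n → ℝ)) (u : Fin n → ℝ) : Fin n → ℝ :=
  u - ∑ v ∈ s \ t, (lam s v).linear u • (v - pt t₀)

lemma projP_combo {s t₀ t t' : Finset (Fin n → ℝ)} (hlam : lamSpec s (lam s))
    (ht' : t' ⊆ s) (ht : t ⊆ s) (μ : (Fin n → ℝ) → ℝ) (h1 : ∑ w ∈ t', μ w = 1) :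
    projP s t₀ t (∑ w ∈ t', μ w • w)
      = ∑ w ∈ t', μ w • (if w ∈ t then w else pt t₀) := by
  classical
  rw [projP]
  have h2 : ∀ v ∈ s \ t, lam s v (∑ w ∈ t', μ w • w) • (v - pt t₀)
      = (if v ∈ t' then μ v else 0) • (v - pt t₀) := by
    intro v hv
    rw [lam_eval hlam ht' μ h1 (Finset.mem_sdiff.mp hv).1]
  rw [Finset.sum_congr rfl h2]
  have hsub : t' \ t ⊆ s \ t := Finset.sdiff_subset_sdiff ht' (le_refl t)
  have h3 : ∑ v ∈ s \ t, (if v ∈ t' then μ v else 0) • (v - pt t₀)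
      = ∑ v ∈ t' \ t, μ v • (v - pt t₀) := by
    rw [← Finset.sum_subset hsub (by
      intro v _ hv
      rcases Finset.mem_sdiff.mp ‹v ∈ s \ t› with ⟨hvs, hvt⟩
      have : v ∉ t' := fun hvt' => hv (Finset.mem_sdiff.mpr ⟨hvt', hvt⟩)
      rw [if_neg this, zero_smul])]
    apply Finset.sum_congr rfl
    intro v hv
    rw [if_pos (Finset.mem_sdiff.mp hv).1]
  rw [h3]
  have h4 : ∑ v ∈ t' \ t, μ v • (v - pt t₀)
      = ∑ v ∈ t', (if v ∉ t then μ v • (v - pt t₀) else (0 : Fin n → ℝ)) := by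
    rw [Finset.sdiff_eq_filter, Finset.sum_filter]
  rw [h4, ← Finset.sum_sub_distrib]
  apply Finset.sum_congr rfl
  intro w _
  by_cases hw : w ∈ t
  · simp [hw]
  · rw [if_pos hw, if_neg hw, smul_sub]
    abel

lemma projL_combo {s t₀ t t' : Finset (Fin n → ℝ)} (hlam : lamSpec s (lam s))
    (ht' : t' ⊆ s) (μ : (Fin n → ℝ) → ℝ) (h0 : ∑ w ∈ t', μ w = 0) :
    projL s t₀ t (∑ w ∈ t', μ w • w)
      = ∑ w ∈ t', μ w • (if w ∈ t then w else pt t₀) := by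
  classical
  rw [projL]
  have h2 : ∀ v ∈ s \ t, (lam s v).linear (∑ w ∈ t', μ w • w) • (v - pt t₀)
      = (if v ∈ t' then μ v else 0) • (v - pt t₀) := by
    intro v hv
    rw [lam_lin_eval hlam ht' μ h0 (Finset.mem_sdiff.mp hv).1]
  rw [Finset.sum_congr rfl h2]
  have hsub : t' \ t ⊆ s \ t := Finset.sdiff_subset_sdiff ht' (le_refl t)
  have h3 : ∑ v ∈ s \ t, (if v ∈ t' then μ v else 0) • (v - pt t₀)
      = ∑ v ∈ t' \ t, μ v • (v - pt t₀) := by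
    rw [← Finset.sum_subset hsub (by
      intro v _ hv
      rcases Finset.mem_sdiff.mp ‹v ∈ s \ t› with ⟨hvs, hvt⟩
      have : v ∉ t' := fun hvt' => hv (Finset.mem_sdiff.mpr ⟨hvt', hvt⟩)
      rw [if_neg this, zero_smul])]
    apply Finset.sum_congr rfl
    intro v hv
    rw [if_pos (Finset.mem_sdiff.mp hv).1]
  rw [h3]
  have h4 : ∑ v ∈ t' \ t, μ v • (v - pt t₀)
      = ∑ v ∈ t', (if v ∉ t then μ v • (v - pt t₀) else (0 : Fin n → ℝ)) := by
    rw [Finset.sdiff_eq_filter, Finset.sum_filter]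
  rw [h4, ← Finset.sum_sub_distrib]
  apply Finset.sum_congr rfl
  intro w _
  by_cases hw : w ∈ t
  · simp [hw]
  · rw [if_pos hw, if_neg hw, smul_sub]
    abel

/-- Representation of points of the convex hull of a finset. -/
lemma convexHull_repr {t' : Finset (Fin n → ℝ)} {x : Fin n → ℝ}
    (hx : x ∈ convexHull ℝ (↑t' : Set (Fin n → ℝ))) :
    ∃ μ : (Fin n → ℝ) → ℝ, (∀ w ∈ t', 0 ≤ μ w) ∧ ∑ w ∈ t', μ w = 1 ∧
      x = ∑ w ∈ t', μ w • w := by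
  rw [Finset.convexHull_eq] at hx
  obtain ⟨μ, h0, h1, hc⟩ := hx
  refine ⟨μ, h0, h1, ?_⟩
  rw [← hc, Finset.centerMass_eq_of_sum_1 _ _ h1]
  rfl

/-- Representation of vectors in the `vectorSpan` of a finset. -/
lemma span_repr {t' : Finset (Fin n → ℝ)} (h : t'.Nonempty) {u : Fin n → ℝ}
    (hu : u ∈ vectorSpan ℝ (↑t' : Set (Fin n → ℝ))) :
    ∃ b : (Fin n → ℝ) → ℝ, ∑ w ∈ t', b w = 0 ∧ u = ∑ w ∈ t', b w • w := by
  classical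
  obtain ⟨w₀, hw₀⟩ := h
  have hsp : vectorSpan ℝ (↑t' : Set (Fin n → ℝ))
      = Submodule.span ℝ ((· -ᵥ w₀) '' (↑t' : Set (Fin n → ℝ))) :=
    vectorSpan_eq_span_vsub_set_right ℝ (Finset.mem_coe.mpr hw₀)
  have himg : ((· -ᵥ w₀) '' (↑t' : Set (Fin n → ℝ)))
      = (↑(t'.image (· - w₀)) : Set (Fin n → ℝ)) := by
    rw [Finset.coe_image]; rfl
  rw [hsp, himg] at hu
  obtain ⟨f, -, hf⟩ := Submodule.mem_span_finset.mp hu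
  have hinj : ∀ x ∈ t', ∀ y ∈ t', x - w₀ = y - w₀ → x = y := by
    intro x _ y _ hxy
    exact sub_left_injective hxy
  rw [Finset.sum_image hinj] at hf
  set a : (Fin n → ℝ) → ℝ := fun w => f (w - w₀) with ha
  refine ⟨fun w => a w - (if w = w₀ then ∑ y ∈ t', a y else 0), ?_, ?_⟩
  · rw [Finset.sum_sub_distrib, Finset.sum_ite_eq' t' w₀ (fun _ => ∑ y ∈ t', a y),
      if_pos hw₀, sub_self]
  · have h5 : ∀ w ∈ t',
        (a w - (if w = w₀ then ∑ y ∈ t', a y else 0)) • w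
        = a w • w - (if w = w₀ then (∑ y ∈ t', a y) • w₀ else 0) := by
      intro w _
      by_cases hw : w = w₀
      · subst hw; rw [if_pos rfl, if_pos rfl, sub_smul]
      · rw [if_neg hw, if_neg hw, sub_zero, sub_zero]
    rw [Finset.sum_congr rfl h5, Finset.sum_sub_distrib,
      Finset.sum_ite_eq' t' w₀ (fun _ => (∑ y ∈ t', a y) • w₀), if_pos hw₀]
    have h6 : ∀ w ∈ t', a w • (w - w₀) = a w • w - a w • w₀ := fun w _ => smul_sub _ _ _
    rw [← hf, Finset.sum_congr rfl h6, Finset.sum_sub_distrib, ← Finset.sum_smul]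

lemma span_mem {t t' t₀ : Finset (Fin n → ℝ)} (hc : pt t₀ ∈ t ∩ t')
    (b : (Fin n → ℝ) → ℝ) (hb0 : ∑ w ∈ t', b w = 0) :
    ∑ w ∈ t', b w • (if w ∈ t then w else pt t₀)
      ∈ vectorSpan ℝ (↑(t ∩ t') : Set (Fin n → ℝ)) := by
  classical
  have key : ∑ w ∈ t', b w • (if w ∈ t then w else pt t₀)
      = ∑ w ∈ t', b w • ((if w ∈ t then w else pt t₀) - pt t₀) := by
    rw [Finset.sum_congr rfl (fun w _ => smul_sub (b w) _ (pt t₀)),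
      Finset.sum_sub_distrib, ← Finset.sum_smul, hb0, zero_smul, sub_zero]
  rw [key]
  apply Submodule.sum_mem
  intro w hw
  apply Submodule.smul_mem
  by_cases hwt : w ∈ t
  · rw [if_pos hwt]
    exact vsub_mem_vectorSpan ℝ (Finset.mem_coe.mpr (Finset.mem_inter.mpr ⟨hwt, hw⟩))
      (Finset.mem_coe.mpr hc)
  · rw [if_neg hwt, sub_self]
    exact Submodule.zero_mem _

lemma projP_fix {s t₀ t : Finset (Fin n → ℝ)} (hlam : lamSpec s (lam s))
    (ht : t ⊆ s) {x : Fin n → ℝ} (hx : x ∈ convexHull ℝ (↑t : Set (Fin n → ℝ))) :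
    projP s t₀ t x = x := by
  obtain ⟨μ, _, h1, rfl⟩ := convexHull_repr hx
  rw [projP_combo hlam ht ht μ h1]
  apply Finset.sum_congr rfl
  intro w hw
  rw [if_pos hw]

lemma projP_mem {s t₀ t t' : Finset (Fin n → ℝ)} (hlam : lamSpec s (lam s))
    (ht' : t' ⊆ s) (ht : t ⊆ s) (ht₀t : t₀ ⊆ t) (ht₀t' : t₀ ⊆ t') (h₀ : t₀.Nonempty)
    {x : Fin n → ℝ} (hx : x ∈ convexHull ℝ (↑t' : Set (Fin n → ℝ))) :
    projP s t₀ t x ∈ convexHull ℝ (↑(t ∩ t') : Set (Fin n → ℝ)) := by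
  obtain ⟨μ, h0, h1, rfl⟩ := convexHull_repr hx
  rw [projP_combo hlam ht' ht μ h1]
  have hc : pt t₀ ∈ t ∩ t' := Finset.mem_inter.mpr ⟨ht₀t (pt_mem h₀), ht₀t' (pt_mem h₀)⟩
  apply (convex_convexHull ℝ _).sum_mem h0 h1
  intro w hw
  apply subset_convexHull ℝ _
  by_cases hwt : w ∈ t
  · rw [if_pos hwt]
    exact Finset.mem_coe.mpr (Finset.mem_inter.mpr ⟨hwt, hw⟩)
  · rw [if_neg hwt]
    exact Finset.mem_coe.mpr hc

lemma projP_inter {s t₀ t t' : Finset (Fin n → ℝ)} (hlam : lamSpec s (lam s))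
    (ht' : t' ⊆ s) (ht : t ⊆ s)
    {x : Fin n → ℝ} (hx : x ∈ convexHull ℝ (↑t' : Set (Fin n → ℝ))) :
    projP s t₀ t x = projP s t₀ (t ∩ t') x := by
  obtain ⟨μ, _, h1, rfl⟩ := convexHull_repr hx
  rw [projP_combo hlam ht' ht μ h1,
    projP_combo hlam ht' (Finset.Subset.trans Finset.inter_subset_right ht') μ h1]
  apply Finset.sum_congr rfl
  intro w hw
  congr 1
  by_cases hwt : w ∈ t
  · rw [if_pos hwt, if_pos (Finset.mem_inter.mpr ⟨hwt, hw⟩)]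
  · rw [if_neg hwt, if_neg (fun hm => hwt (Finset.mem_inter.mp hm).1)]

lemma projL_fix {s t₀ t : Finset (Fin n → ℝ)} (hlam : lamSpec s (lam s))
    (ht : t ⊆ s) (htne : t.Nonempty) {u : Fin n → ℝ}
    (hu : u ∈ vectorSpan ℝ (↑t : Set (Fin n → ℝ))) :
    projL s t₀ t u = u := by
  obtain ⟨b, h0, rfl⟩ := span_repr htne hu
  rw [projL_combo hlam ht b h0]
  apply Finset.sum_congr rfl
  intro w hw
  rw [if_pos hw]

lemma projL_mem {s t₀ t t' : Finset (Fin n → ℝ)} (hlam : lamSpec s (lam s))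
    (ht' : t' ⊆ s) (ht'ne : t'.Nonempty) (ht₀t : t₀ ⊆ t) (ht₀t' : t₀ ⊆ t') (h₀ : t₀.Nonempty)
    {u : Fin n → ℝ} (hu : u ∈ vectorSpan ℝ (↑t' : Set (Fin n → ℝ))) :
    projL s t₀ t u ∈ vectorSpan ℝ (↑(t ∩ t') : Set (Fin n → ℝ)) := by
  obtain ⟨b, h0, rfl⟩ := span_repr ht'ne hu
  rw [projL_combo hlam ht' b h0]
  exact span_mem (Finset.mem_inter.mpr ⟨ht₀t (pt_mem h₀), ht₀t' (pt_mem h₀)⟩) b h0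

lemma projL_inter {s t₀ t t' : Finset (Fin n → ℝ)} (hlam : lamSpec s (lam s))
    (ht' : t' ⊆ s) (ht'ne : t'.Nonempty)
    {u : Fin n → ℝ} (hu : u ∈ vectorSpan ℝ (↑t' : Set (Fin n → ℝ))) :
    projL s t₀ t u = projL s t₀ (t ∩ t') u := by
  obtain ⟨b, h0, rfl⟩ := span_repr ht'ne hu
  rw [projL_combo (t := t) hlam ht' b h0, projL_combo (t := t ∩ t') hlam ht' b h0]
  apply Finset.sum_congr rfl
  intro w hw
  congr 1
  by_cases hwt : w ∈ t
  · rw [if_pos hwt, if_pos (Finset.mem_inter.mpr ⟨hwt, hw⟩)]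
  · rw [if_neg hwt, if_neg (fun hm => hwt (Finset.mem_inter.mp hm).1)]

/-- Any affine map to ℝ is smooth (finite-dimensional domain). -/
lemma affine_contDiff (f : (Fin n → ℝ) →ᵃ[ℝ] ℝ) : ContDiff ℝ (⊤ : ℕ∞) f := by
  have : (f : (Fin n → ℝ) → ℝ) = fun x => f.linear x + f 0 := f.decomp
  rw [this]
  exact (f.linear.toContinuousLinearMap.contDiff).add contDiff_const

lemma projP_contDiff (s t₀ t : Finset (Fin n → ℝ)) :
    ContDiff ℝ (⊤ : ℕ∞) (projP s t₀ t) := by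
  apply ContDiff.sub contDiff_id
  apply ContDiff.sum
  intro v _
  exact (affine_contDiff (lam s v)).smul contDiff_const

end Proj

section Bump
variable {n p : ℕ}

/-- Bump function positive exactly where all `t₀`-coordinates are positive. -/
noncomputable def bump (s t₀ : Finset (Fin n → ℝ)) (x : Fin n → ℝ) : ℝ :=
  ∏ v ∈ t₀, expNegInvGlue (lam s v x)

noncomputable def Phi (s : Finset (Fin n → ℝ)) (x : Fin n → ℝ) : ℝ :=
  ∑ t₀ ∈ s.powerset.erase ∅, bump s t₀ x

lemma bump_nonneg (s t₀ : Finset (Fin n → ℝ)) (x : Fin n → ℝ) : 0 ≤ bump s t₀ x :=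
  Finset.prod_nonneg fun v _ => expNegInvGlue.nonneg _

lemma bump_contDiff (s t₀ : Finset (Fin n → ℝ)) :
    ContDiff ℝ (⊤ : ℕ∞) (bump s t₀) :=
  contDiff_prod fun v _ => expNegInvGlue.contDiff.comp (affine_contDiff (lam s v))

lemma Phi_contDiff (s : Finset (Fin n → ℝ)) : ContDiff ℝ (⊤ : ℕ∞) (Phi s) :=
  ContDiff.sum fun t₀ _ => bump_contDiff s t₀

/-- The bump of `t₀` vanishes on the hull of any face not containing `t₀`. -/
lemma bump_eq_zero {s t₀ t' : Finset (Fin n → ℝ)} (hlam : lamSpec s (lam s))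
    (ht' : t' ⊆ s) (ht₀ : t₀ ⊆ s) {x : Fin n → ℝ}
    (hx : x ∈ convexHull ℝ (↑t' : Set (Fin n → ℝ))) (hnot : ¬ t₀ ⊆ t') :
    bump s t₀ x = 0 := by
  classical
  obtain ⟨v₀, hv₀t₀, hv₀t'⟩ := Finset.not_subset.mp hnot
  obtain ⟨μ, _, h1, rfl⟩ := convexHull_repr hx
  apply Finset.prod_eq_zero hv₀t₀
  rw [lam_eval hlam ht' μ h1 (ht₀ hv₀t₀), if_neg hv₀t', expNegInvGlue.zero]

/-- `Phi` is positive on the hull of any nonempty face of `s`. -/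
lemma Phi_pos {s t' : Finset (Fin n → ℝ)} (hlam : lamSpec s (lam s))
    (ht' : t' ⊆ s) {x : Fin n → ℝ}
    (hx : x ∈ convexHull ℝ (↑t' : Set (Fin n → ℝ))) : 0 < Phi s x := by
  classical
  obtain ⟨μ, h0, h1, hxe⟩ := convexHull_repr hx
  set t₁ : Finset (Fin n → ℝ) := t'.filter (fun w => 0 < μ w) with ht₁
  have ht₁ne : t₁.Nonempty := by
    by_contra h
    rw [Finset.not_nonempty_iff_eq_empty] at h
    have : ∑ w ∈ t', μ w ≤ 0 := by
      apply Finset.sum_nonpos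
      intro w hw
      by_contra hpos
      push_neg at hpos
      have : w ∈ t₁ := Finset.mem_filter.mpr ⟨hw, hpos⟩
      rw [h] at this
      exact absurd this (Finset.notMem_empty w)
    rw [h1] at this; linarith
  have hmem : t₁ ∈ s.powerset.erase ∅ := by
    rw [Finset.mem_erase, Finset.mem_powerset]
    exact ⟨Finset.nonempty_iff_ne_empty.mp ht₁ne,
      Finset.Subset.trans (Finset.filter_subset _ _) ht'⟩
  have hpos : 0 < bump s t₁ x := by
    apply Finset.prod_pos
    intro v hv
    rcases Finset.mem_filter.mp hv with ⟨hvt', hvpos⟩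
    apply expNegInvGlue.pos_of_pos
    rw [hxe, lam_eval hlam ht' μ h1 (ht' hvt'), if_pos hvt']
    exact hvpos
  exact Finset.sum_pos' (fun t₀ _ => bump_nonneg s t₀ x) ⟨t₁, hmem, hpos⟩

end Bump

section Glue
variable {n p : ℕ}

/-- Bundled linear version of `projL`. -/
noncomputable def projLmap (s t₀ t : Finset (Fin n → ℝ)) : (Fin n → ℝ) →ₗ[ℝ] (Fin n → ℝ) :=
  LinearMap.id - ∑ v ∈ s \ t, ((lam s v).linear).smulRight (v - pt t₀)

lemma projLmap_apply (s t₀ t : Finset (Fin n → ℝ)) (u : Fin n → ℝ) :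
    projLmap s t₀ t u = projL s t₀ t u := by
  rw [projLmap, projL, LinearMap.sub_apply, LinearMap.id_apply]
  congr 1
  rw [LinearMap.coe_sum, Finset.sum_apply]
  exact Finset.sum_congr rfl fun v _ => LinearMap.smulRight_apply _ _ _

/-- index set: faces `t` with `t₀ ⊆ t ⊊ s`. -/
noncomputable def faceIdx (s t₀ : Finset (Fin n → ℝ)) : Finset (Finset (Fin n → ℝ)) := by
  classical exact (s.powerset.filter (fun t => t₀ ⊆ t)).erase s

lemma mem_faceIdx {s t₀ t : Finset (Fin n → ℝ)} :
    t ∈ faceIdx s t₀ ↔ t ≠ s ∧ t ⊆ s ∧ t₀ ⊆ t := by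
  classical
  rw [faceIdx]
  simp only [Finset.mem_erase, Finset.mem_filter, Finset.mem_powerset]

/-- local candidate form adapted to the face `t₀`, by inclusion-exclusion. -/
noncomputable def Gloc (prev : Finset (Fin n → ℝ) → (Fin n → ℝ) → AlternatingMap ℝ (Fin n → ℝ) ℝ (Fin p))
    (s t₀ : Finset (Fin n → ℝ)) (x : Fin n → ℝ) : AlternatingMap ℝ (Fin n → ℝ) ℝ (Fin p) :=
  ∑ t ∈ faceIdx s t₀,
    ((-1 : ℝ) ^ (s.card + t.card + 1)) •
      ((prev t (projP s t₀ t x)).compLinearMap (projLmap s t₀ t))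

/-- global candidate form on the simplex `s`: a convex blend of the local ones. -/
noncomputable def glue (prev : Finset (Fin n → ℝ) → (Fin n → ℝ) → AlternatingMap ℝ (Fin n → ℝ) ℝ (Fin p))
    (s : Finset (Fin n → ℝ)) (x : Fin n → ℝ) : AlternatingMap ℝ (Fin n → ℝ) ℝ (Fin p) :=
  (Phi s x)⁻¹ • ∑ t₀ ∈ s.powerset.erase ∅, bump s t₀ x • Gloc prev s t₀ x

lemma altSum_apply {ι : Type*} (T : Finset ι)
    (f : ι → AlternatingMap ℝ (Fin n → ℝ) ℝ (Fin p)) (u : Fin p → (Fin n → ℝ)) :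
    (∑ i ∈ T, f i) u = ∑ i ∈ T, f i u := by
  classical
  induction T using Finset.induction_on with
  | empty => simp
  | insert _ _ h ih => rw [Finset.sum_insert h, Finset.sum_insert h, AlternatingMap.add_apply, ih]

lemma glue_apply (prev : Finset (Fin n → ℝ) → (Fin n → ℝ) → AlternatingMap ℝ (Fin n → ℝ) ℝ (Fin p))
    (s : Finset (Fin n → ℝ)) (x : Fin n → ℝ) (u : Fin p → (Fin n → ℝ)) :
    glue prev s x u = (Phi s x)⁻¹ *
      ∑ t₀ ∈ s.powerset.erase ∅, bump s t₀ x * Gloc prev s t₀ x u := by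
  rw [glue, AlternatingMap.smul_apply, altSum_apply, smul_eq_mul]
  simp only [AlternatingMap.smul_apply, smul_eq_mul]

lemma Gloc_apply (prev : Finset (Fin n → ℝ) → (Fin n → ℝ) → AlternatingMap ℝ (Fin n → ℝ) ℝ (Fin p))
    (s t₀ : Finset (Fin n → ℝ)) (x : Fin n → ℝ) (u : Fin p → (Fin n → ℝ)) :
    Gloc prev s t₀ x u = ∑ t ∈ faceIdx s t₀,
      ((-1 : ℝ) ^ (s.card + t.card + 1)) *
        prev t (projP s t₀ t x) (fun l => projL s t₀ t (u l)) := by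
  rw [Gloc, altSum_apply]
  simp only [AlternatingMap.smul_apply, smul_eq_mul, AlternatingMap.compLinearMap_apply,
    projLmap_apply]

/-- Key lemma: the local inclusion-exclusion form `Gloc` agrees with the face data
tangentially on every proper face `t'` of `s` containing `t₀`. -/
lemma Gloc_agree {s t₀ t' : Finset (Fin n → ℝ)} (hlam : lamSpec s (lam s))
    (prev : Finset (Fin n → ℝ) → (Fin n → ℝ) → AlternatingMap ℝ (Fin n → ℝ) ℝ (Fin p))
    (hcoh : ∀ r t : Finset (Fin n → ℝ), r.Nonempty → r ⊆ t → t ≠ s → t ⊆ s →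
      ∀ y ∈ convexHull ℝ (↑r : Set (Fin n → ℝ)), ∀ w : Fin p → (Fin n → ℝ),
        (∀ l, w l ∈ vectorSpan ℝ (↑r : Set (Fin n → ℝ))) → prev t y w = prev r y w)
    (ht's : t' ⊆ s) (ht'nes : t' ≠ s) (ht₀ : t₀ ⊆ t') (ht₀ne : t₀.Nonempty)
    {x : Fin n → ℝ} (hx : x ∈ convexHull ℝ (↑t' : Set (Fin n → ℝ)))
    {u : Fin p → (Fin n → ℝ)} (hu : ∀ l, u l ∈ vectorSpan ℝ (↑t' : Set (Fin n → ℝ))) :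
    Gloc prev s t₀ x u = prev t' x u := by
  classical
  have ht'ne : t'.Nonempty := ht₀ne.mono ht₀
  set F : Finset (Fin n → ℝ) → ℝ := fun r =>
    prev r (projP s t₀ r x) (fun l => projL s t₀ r (u l)) with hF
  set f : Finset (Fin n → ℝ) → ℝ := fun t =>
    (-1 : ℝ) ^ (s.card + t.card + 1) * F (t ∩ t') with hf
  -- Step A: each summand is `f`
  have stepA : Gloc prev s t₀ x u = ∑ t ∈ faceIdx s t₀, f t := by
    rw [Gloc_apply]
    apply Finset.sum_congr rfl
    intro t htm
    obtain ⟨htns, hts, ht₀t⟩ := mem_faceIdx.mp htm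
    congr 1
    have h1 : projP s t₀ t x = projP s t₀ (t ∩ t') x := projP_inter hlam ht's hts hx
    have h2 : ∀ l, projL s t₀ t (u l) = projL s t₀ (t ∩ t') (u l) :=
      fun l => projL_inter hlam ht's ht'ne (hu l)
    have hy : projP s t₀ (t ∩ t') x ∈ convexHull ℝ (↑(t ∩ t') : Set (Fin n → ℝ)) := by
      rw [← h1]; exact projP_mem hlam ht's hts ht₀t ht₀ ht₀ne hx
    have hw : ∀ l, projL s t₀ (t ∩ t') (u l) ∈ vectorSpan ℝ (↑(t ∩ t') : Set (Fin n → ℝ)) := by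
      intro l; rw [← h2 l]; exact projL_mem hlam ht's ht'ne ht₀t ht₀ ht₀ne (hu l)
    have hrne : (t ∩ t').Nonempty := ht₀ne.mono (Finset.subset_inter ht₀t ht₀)
    have h1' : (fun l => projL s t₀ t (u l)) = fun l => projL s t₀ (t ∩ t') (u l) :=
      funext h2
    rw [h1, h1']
    exact hcoh (t ∩ t') t hrne Finset.inter_subset_left htns hts _ hy _ hw
  -- Step B: involution kills the full interval sum
  have hsd : (s \ t').Nonempty := by
    rw [Finset.sdiff_nonempty]
    intro hsub
    exact ht'nes (Finset.Subset.antisymm ht's hsub)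
  obtain ⟨v₀, hv₀⟩ := hsd
  obtain ⟨hv₀s, hv₀t'⟩ := Finset.mem_sdiff.mp hv₀
  have hv₀t₀ : v₀ ∉ t₀ := fun h => hv₀t' (ht₀ h)
  set A : Finset (Finset (Fin n → ℝ)) := s.powerset.filter (fun t => t₀ ⊆ t) with hA
  have hmemA : ∀ {t}, t ∈ A ↔ t ⊆ s ∧ t₀ ⊆ t := by
    intro t; rw [hA, Finset.mem_filter, Finset.mem_powerset]
  have hsum0 : ∑ t ∈ A, f t = 0 := by
    apply Finset.sum_involution
      (g := fun t _ => if v₀ ∈ t then t.erase v₀ else insert v₀ t)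
    · -- f t + f (g t) = 0
      intro t htm
      by_cases hv : v₀ ∈ t
      · rw [if_pos hv]
        have hcard : t.card = (t.erase v₀).card + 1 := (Finset.card_erase_add_one hv).symm
        have hint : t.erase v₀ ∩ t' = t ∩ t' := by
          ext y
          simp only [Finset.mem_inter, Finset.mem_erase]
          exact ⟨fun ⟨⟨_, hy⟩, hy'⟩ => ⟨hy, hy'⟩,
            fun ⟨hy, hy'⟩ => ⟨⟨fun he => hv₀t' (he ▸ hy'), hy⟩, hy'⟩⟩
        show (-1 : ℝ) ^ (s.card + t.card + 1) * F (t ∩ t')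
            + (-1 : ℝ) ^ (s.card + (t.erase v₀).card + 1) * F (t.erase v₀ ∩ t') = 0
        rw [hint, hcard,
          show s.card + ((t.erase v₀).card + 1) + 1 = (s.card + (t.erase v₀).card + 1) + 1
            from by omega, pow_succ]
        ring
      · rw [if_neg hv]
        have hcard : (insert v₀ t).card = t.card + 1 := Finset.card_insert_of_notMem hv
        have hint : insert v₀ t ∩ t' = t ∩ t' := by
          ext y
          simp only [Finset.mem_inter, Finset.mem_insert]
          exact ⟨fun ⟨hy, hy'⟩ => ⟨hy.resolve_left (fun he => hv₀t' (he ▸ hy')), hy'⟩,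
            fun ⟨hy, hy'⟩ => ⟨Or.inr hy, hy'⟩⟩
        show (-1 : ℝ) ^ (s.card + t.card + 1) * F (t ∩ t')
            + (-1 : ℝ) ^ (s.card + (insert v₀ t).card + 1) * F (insert v₀ t ∩ t') = 0
        rw [hint, hcard,
          show s.card + (t.card + 1) + 1 = (s.card + t.card + 1) + 1 from by omega, pow_succ]
        ring
    · -- g t ≠ t
      intro t htm hft
      by_cases hv : v₀ ∈ t
      · rw [if_pos hv]
        intro he
        rw [← he] at hv
        exact Finset.notMem_erase v₀ t hv
      · rw [if_neg hv]
        intro he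
        exact hv (he ▸ Finset.mem_insert_self v₀ t)
    · -- involution
      intro t htm
      by_cases hv : v₀ ∈ t
      · rw [if_pos hv, if_neg (Finset.notMem_erase v₀ t), Finset.insert_erase hv]
      · rw [if_neg hv, if_pos (Finset.mem_insert_self v₀ t), Finset.erase_insert hv]
    · -- g t ∈ A
      intro t htm
      obtain ⟨hts, ht₀t⟩ := hmemA.mp htm
      by_cases hv : v₀ ∈ t
      · rw [if_pos hv]
        refine hmemA.mpr ⟨Finset.Subset.trans (Finset.erase_subset v₀ t) hts, ?_⟩
        intro y hy
        exact Finset.mem_erase.mpr ⟨fun he => hv₀t₀ (he ▸ hy), ht₀t hy⟩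
      · rw [if_neg hv]
        exact hmemA.mpr ⟨Finset.insert_subset hv₀s hts,
          Finset.Subset.trans ht₀t (Finset.subset_insert v₀ t)⟩
  have hsA : s ∈ A := hmemA.mpr ⟨Finset.Subset.refl s, Finset.Subset.trans ht₀ ht's⟩
  have hface : faceIdx s t₀ = A.erase s := by rw [faceIdx]
  have hsplit : ∑ t ∈ A.erase s, f t + f s = ∑ t ∈ A, f t :=
    Finset.sum_erase_add A f hsA
  have hsum : ∑ t ∈ faceIdx s t₀, f t = - f s := by
    rw [hface]
    have := hsplit.trans hsum0
    linarith
  -- Step C: the `t = s` term is `- prev t' x u`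
  have hfs : f s = - prev t' x u := by
    rw [hf]
    dsimp only
    rw [Finset.inter_eq_right.mpr ht's]
    have hodd : Odd (s.card + s.card + 1) := ⟨s.card, by ring⟩
    rw [hodd.neg_one_pow]
    rw [hF]
    dsimp only
    rw [projP_fix hlam ht's hx]
    have : (fun l => projL s t₀ t' (u l)) = u :=
      funext fun l => projL_fix hlam ht's ht'ne (hu l)
    rw [this]
    ring
  rw [stepA, hsum, hfs, neg_neg]

/-- The blended form agrees tangentially with the data on every proper face. -/
lemma glue_agree {s t' : Finset (Fin n → ℝ)} (hlam : lamSpec s (lam s))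
    (prev : Finset (Fin n → ℝ) → (Fin n → ℝ) → AlternatingMap ℝ (Fin n → ℝ) ℝ (Fin p))
    (hcoh : ∀ r t : Finset (Fin n → ℝ), r.Nonempty → r ⊆ t → t ≠ s → t ⊆ s →
      ∀ y ∈ convexHull ℝ (↑r : Set (Fin n → ℝ)), ∀ w : Fin p → (Fin n → ℝ),
        (∀ l, w l ∈ vectorSpan ℝ (↑r : Set (Fin n → ℝ))) → prev t y w = prev r y w)
    (ht's : t' ⊆ s) (ht'nes : t' ≠ s) (ht'ne : t'.Nonempty)
    {x : Fin n → ℝ} (hx : x ∈ convexHull ℝ (↑t' : Set (Fin n → ℝ)))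
    {u : Fin p → (Fin n → ℝ)} (hu : ∀ l, u l ∈ vectorSpan ℝ (↑t' : Set (Fin n → ℝ))) :
    glue prev s x u = prev t' x u := by
  classical
  rw [glue_apply]
  have hterm : ∀ t₀ ∈ s.powerset.erase ∅,
      bump s t₀ x * Gloc prev s t₀ x u = bump s t₀ x * prev t' x u := by
    intro t₀ hm
    obtain ⟨ht₀e, ht₀s⟩ := Finset.mem_erase.mp hm
    have ht₀ne : t₀.Nonempty := Finset.nonempty_iff_ne_empty.mpr ht₀e
    have ht₀s' : t₀ ⊆ s := Finset.mem_powerset.mp ht₀s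
    by_cases h : t₀ ⊆ t'
    · rw [Gloc_agree hlam prev hcoh ht's ht'nes h ht₀ne hx hu]
    · rw [bump_eq_zero hlam ht's ht₀s' hx h, zero_mul, zero_mul]
  rw [Finset.sum_congr rfl hterm, ← Finset.sum_mul]
  have hPhi : ∑ t₀ ∈ s.powerset.erase ∅, bump s t₀ x = Phi s x := rfl
  rw [hPhi, ← mul_assoc, inv_mul_cancel₀ (Phi_pos hlam ht's hx).ne', one_mul]

/-- The blended form is smooth on the simplex. -/
lemma glue_smooth {s : Finset (Fin n → ℝ)} (hlam : lamSpec s (lam s))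
    (prev : Finset (Fin n → ℝ) → (Fin n → ℝ) → AlternatingMap ℝ (Fin n → ℝ) ℝ (Fin p))
    (hsmooth : ∀ t : Finset (Fin n → ℝ), t ≠ s → t ⊆ s → t.Nonempty →
      ∀ w : Fin p → (Fin n → ℝ),
        ContDiffOn ℝ (⊤ : ℕ∞) (fun y => prev t y w) (convexHull ℝ (↑t : Set (Fin n → ℝ))))
    (u : Fin p → (Fin n → ℝ)) :
    ContDiffOn ℝ (⊤ : ℕ∞) (fun x => glue prev s x u) (convexHull ℝ (↑s : Set (Fin n → ℝ))) := by
  classical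
  simp only [glue_apply, Gloc_apply]
  apply ContDiffOn.mul
  · exact ContDiffOn.inv ((Phi_contDiff s).contDiffOn)
      (fun x hx => (Phi_pos hlam (Finset.Subset.refl s) hx).ne')
  · apply ContDiffOn.sum
    intro t₀ ht₀m
    obtain ⟨ht₀e, ht₀s⟩ := Finset.mem_erase.mp ht₀m
    have ht₀ne : t₀.Nonempty := Finset.nonempty_iff_ne_empty.mpr ht₀e
    have ht₀s' : t₀ ⊆ s := Finset.mem_powerset.mp ht₀s
    apply ContDiffOn.mul ((bump_contDiff s t₀).contDiffOn)
    apply ContDiffOn.sum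
    intro t htm
    obtain ⟨htns, hts, ht₀t⟩ := mem_faceIdx.mp htm
    apply ContDiffOn.mul contDiffOn_const
    have hmain := hsmooth t htns hts (ht₀ne.mono ht₀t) (fun l => projL s t₀ t (u l))
    apply hmain.comp (projP_contDiff s t₀ t).contDiffOn
    intro x hx
    have := projP_mem hlam (Finset.Subset.refl s) hts ht₀t ht₀s' ht₀ne hx
    rwa [Finset.inter_eq_left.mpr hts] at this

open scoped Classical in
/-- The extension, by strong recursion on faces. -/
noncomputable def extForm (L : Set (Finset (Fin n → ℝ)))
    (ξ : Finset (Fin n → ℝ) → (Fin n → ℝ) → AlternatingMap ℝ (Fin n → ℝ) ℝ (Fin p)) :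
    Finset (Fin n → ℝ) → (Fin n → ℝ) → AlternatingMap ℝ (Fin n → ℝ) ℝ (Fin p) :=
  Finset.strongInduction fun s ih =>
    if s ∈ L then ξ s
    else glue (fun t => if h : t ⊂ s then ih t h else fun _ => 0) s

open scoped Classical in
lemma extForm_eq (L : Set (Finset (Fin n → ℝ)))
    (ξ : Finset (Fin n → ℝ) → (Fin n → ℝ) → AlternatingMap ℝ (Fin n → ℝ) ℝ (Fin p))
    (s : Finset (Fin n → ℝ)) :
    extForm L ξ s = if s ∈ L then ξ s
      else glue (fun t => if _ : t ⊂ s then extForm L ξ t else fun _ => 0) s :=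
  Finset.strongInduction_eq _ s

lemma glue_congr {s : Finset (Fin n → ℝ)}
    {prev prev' : Finset (Fin n → ℝ) → (Fin n → ℝ) → AlternatingMap ℝ (Fin n → ℝ) ℝ (Fin p)}
    (h : ∀ t, t ⊂ s → prev t = prev' t) : glue prev s = glue prev' s := by
  funext x
  rw [glue, glue]
  congr 1
  apply Finset.sum_congr rfl
  intro t₀ _
  congr 1
  rw [Gloc, Gloc]
  apply Finset.sum_congr rfl
  intro t htm
  obtain ⟨htns, hts, _⟩ := mem_faceIdx.mp htm
  rw [h t (hts.ssubset_of_ne htns)]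

lemma extForm_eq_glue {L : Set (Finset (Fin n → ℝ))}
    {ξ : Finset (Fin n → ℝ) → (Fin n → ℝ) → AlternatingMap ℝ (Fin n → ℝ) ℝ (Fin p)}
    {s : Finset (Fin n → ℝ)} (hsL : s ∉ L) :
    extForm L ξ s = glue (extForm L ξ) s := by
  classical
  rw [extForm_eq, if_neg hsL]
  exact glue_congr fun t ht => by rw [dif_pos ht]

lemma extForm_mem {L : Set (Finset (Fin n → ℝ))}
    {ξ : Finset (Fin n → ℝ) → (Fin n → ℝ) → AlternatingMap ℝ (Fin n → ℝ) ℝ (Fin p)}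
    {s : Finset (Fin n → ℝ)} (hsL : s ∈ L) : extForm L ξ s = ξ s := by
  classical
  rw [extForm_eq, if_pos hsL]

/-- Main induction: the extension is smooth on each face and coherent on all pairs of faces. -/
lemma extForm_main {K : SimplicialComplex ℝ (Fin n → ℝ)} {L : Set (Finset (Fin n → ℝ))}
    {ξ : Finset (Fin n → ℝ) → (Fin n → ℝ) → AlternatingMap ℝ (Fin n → ℝ) ℝ (Fin p)}
    (hLK : L ⊆ K.faces)
    (hLd : ∀ s ∈ L, ∀ t : Finset (Fin n → ℝ), t ⊆ s → t.Nonempty → t ∈ L)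
    (hξs : ∀ s ∈ L, ∀ u : Fin p → (Fin n → ℝ),
      ContDiffOn ℝ (⊤ : ℕ∞) (fun x => ξ s x u) (convexHull ℝ (↑s : Set (Fin n → ℝ))))
    (hξc : ∀ t ∈ L, ∀ s ∈ L, t ⊆ s →
      ∀ x ∈ convexHull ℝ (↑t : Set (Fin n → ℝ)), ∀ u : Fin p → (Fin n → ℝ),
        (∀ l, u l ∈ vectorSpan ℝ (↑t : Set (Fin n → ℝ))) → ξ t x u = ξ s x u) :
    ∀ s : Finset (Fin n → ℝ), s ∈ K.faces →
      (∀ u : Fin p → (Fin n → ℝ),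
        ContDiffOn ℝ (⊤ : ℕ∞) (fun x => extForm L ξ s x u)
          (convexHull ℝ (↑s : Set (Fin n → ℝ)))) ∧
      (∀ t : Finset (Fin n → ℝ), t ⊆ s → t.Nonempty →
        ∀ x ∈ convexHull ℝ (↑t : Set (Fin n → ℝ)), ∀ u : Fin p → (Fin n → ℝ),
          (∀ l, u l ∈ vectorSpan ℝ (↑t : Set (Fin n → ℝ))) →
            extForm L ξ t x u = extForm L ξ s x u) := by
  intro s
  induction s using Finset.strongInductionOn with
  | _ s ih =>
    intro hsK
    have hlam := lam_spec (K.indep hsK)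
    by_cases hsL : s ∈ L
    · have he : extForm L ξ s = ξ s := extForm_mem hsL
      constructor
      · intro u
        simp only [he]
        exact hξs s hsL u
      · intro t hts htne x hx u hu
        have htL : t ∈ L := hLd s hsL t hts htne
        rw [he, extForm_mem htL]
        exact hξc t htL s hsL hts x hx u hu
    · have he := extForm_eq_glue (L := L) (ξ := ξ) hsL
      have hcoh : ∀ r t : Finset (Fin n → ℝ), r.Nonempty → r ⊆ t → t ≠ s → t ⊆ s →
          ∀ y ∈ convexHull ℝ (↑r : Set (Fin n → ℝ)), ∀ w : Fin p → (Fin n → ℝ),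
            (∀ l, w l ∈ vectorSpan ℝ (↑r : Set (Fin n → ℝ))) →
              extForm L ξ t y w = extForm L ξ r y w := by
        intro r t hrne hrt htns hts y hy w hw
        have htK : t ∈ K.faces := K.down_closed hsK hts (hrne.mono hrt)
        exact ((ih t (hts.ssubset_of_ne htns) htK).2 r hrt hrne y hy w hw).symm
      constructor
      · intro u
        have hsm : ∀ t : Finset (Fin n → ℝ), t ≠ s → t ⊆ s → t.Nonempty →
            ∀ w : Fin p → (Fin n → ℝ), ContDiffOn ℝ (⊤ : ℕ∞) (fun y => extForm L ξ t y w)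
              (convexHull ℝ (↑t : Set (Fin n → ℝ))) := by
          intro t htns hts htne w
          have htK : t ∈ K.faces := K.down_closed hsK hts htne
          exact (ih t (hts.ssubset_of_ne htns) htK).1 w
        simp only [he]
        exact glue_smooth hlam _ hsm u
      · intro t hts htne x hx u hu
        by_cases hteq : t = s
        · subst hteq; rfl
        · rw [he]
          exact (glue_agree hlam _ hcoh hts hteq htne hx hu).symm

end Glue
end PSFExt

end PSFAux

/-- general extension lemma: every piecewise smooth `p`-form on a
subcomplex `L` of a finite geometric simplicial complex `K` in `ℝⁿ` extends to
a piecewise smooth `p`-form on all of `K`. -/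
theorem extension_of_forms_subcomplex
    (n p : ℕ) (K : SimplicialComplex ℝ (Fin n → ℝ)) (hfin : K.faces.Finite)
    (L : Set (Finset (Fin n → ℝ))) (hL : IsSubcomplex n K.faces L)
    (ξ : Finset (Fin n → ℝ) → (Fin n → ℝ) →
      AlternatingMap ℝ (Fin n → ℝ) ℝ (Fin p))
    (hξ : IsPiecewiseSmoothForm n p L ξ) :
    ∃ ω : Finset (Fin n → ℝ) → (Fin n → ℝ) →
        AlternatingMap ℝ (Fin n → ℝ) ℝ (Fin p),
      IsPiecewiseSmoothForm n p K.faces ω ∧ ∀ s ∈ L, ω s = ξ s := by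
  classical
  refine ⟨PSFExt.extForm L ξ, ⟨?_, ?_⟩, ?_⟩
  · intro s hs u
    exact (PSFExt.extForm_main hL.1 hL.2 hξ.1 hξ.2 s hs).1 u
  · intro t htK s hsK hts x hx u hu
    have htne : t.Nonempty :=
      Finset.nonempty_iff_ne_empty.mpr (fun h => K.empty_notMem (h ▸ htK))
    exact (PSFExt.extForm_main hL.1 hL.2 hξ.1 hξ.2 s hsK).2 t hts htne x hx u hu
  · intro s hsL
    exact PSFExt.extForm_mem hsL
end

section
/- Let K be a finite geometric simplicial complex in ℝⁿ, K_0 and K_1 subcomplexes with K = K_0 ∪ K_1, and L = K_0 ∩ K_1, and fix p ∈ ℕ. Then the map μ(ξ, η) = η|L − ξ|L, from pairs of piecewise smooth p-forms on K_0 and K_1 to piecewise smooth p-forms on L, is surjective: for every piecewise smooth p-form γ on L there exist piecewise smooth p-forms ξ on K_0 and η on K_1, with ξ|L = −(1/2)γ and η|L = (1/2)γ, so that η|L − ξ|L = γ. (Here forms are subtracted and scaled pointwise: (η − ξ)_s(x) = η_s(x) − ξ_s(x).) -/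
open Geometry

namespace PSF

variable {n p : ℕ}

lemma exists_dual {n : ℕ} {s : Finset (Fin n → ℝ)}
    (hs : AffineIndependent ℝ ((↑) : s → (Fin n → ℝ))) :
    ∃ b : (Fin n → ℝ) → ((Fin n → ℝ) →ᵃ[ℝ] ℝ),
      ∀ w ∈ s, ∀ w' ∈ s, b w w' = if w = w' then 1 else 0 := by
  classical
  have hs' : AffineIndependent ℝ (fun x => x : (↑s : Set (Fin n → ℝ)) → (Fin n → ℝ)) := hs
  obtain ⟨t, hst, hti, htt⟩ := exists_subset_affineIndependent_affineSpan_eq_top hs'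
  let B : AffineBasis t ℝ (Fin n → ℝ) := ⟨fun x => x, hti, by rwa [Subtype.range_coe]⟩
  refine ⟨fun w => if h : w ∈ t then B.coord ⟨w, h⟩ else AffineMap.const ℝ _ 0, ?_⟩
  intro w hw w' hw'
  have hwt : w ∈ t := hst (by exact_mod_cast hw)
  have hw't : w' ∈ t := hst (by exact_mod_cast hw')
  have hB : B ⟨w', hw't⟩ = w' := rfl
  dsimp only
  rw [dif_pos hwt, ← hB, B.coord_apply]
  rw [hB]
  by_cases h : w = w'
  · subst h; rw [if_pos rfl, if_pos rfl]
  · rw [if_neg (by simpa [Subtype.ext_iff] using h), if_neg h]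

open scoped Classical in
noncomputable def dual (K : SimplicialComplex ℝ (Fin n → ℝ)) (s : Finset (Fin n → ℝ)) :
    (Fin n → ℝ) → ((Fin n → ℝ) →ᵃ[ℝ] ℝ) :=
  if h : s ∈ K.faces then (exists_dual (K.indep h)).choose
  else fun _ => AffineMap.const ℝ _ 0

lemma dual_spec {K : SimplicialComplex ℝ (Fin n → ℝ)} {s : Finset (Fin n → ℝ)}
    (h : s ∈ K.faces) :
    ∀ w ∈ s, ∀ w' ∈ s, dual K s w w' = if w = w' then 1 else 0 := by
  simp only [dual, dif_pos h]
  exact (exists_dual (K.indep h)).choose_spec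

end PSF

namespace PSF

variable {n p : ℕ}

noncomputable def sig (K : SimplicialComplex ℝ (Fin n → ℝ)) (s t : Finset (Fin n → ℝ))
    (x : Fin n → ℝ) : ℝ := ∑ w ∈ t, dual K s w x

noncomputable def num (K : SimplicialComplex ℝ (Fin n → ℝ)) (s t : Finset (Fin n → ℝ))
    (x : Fin n → ℝ) : Fin n → ℝ := ∑ w ∈ t, dual K s w x • w

noncomputable def rho (K : SimplicialComplex ℝ (Fin n → ℝ)) (s t : Finset (Fin n → ℝ))
    (x : Fin n → ℝ) : Fin n → ℝ := (sig K s t x)⁻¹ • num K s t x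

noncomputable def sigLin (K : SimplicialComplex ℝ (Fin n → ℝ)) (s t : Finset (Fin n → ℝ)) :
    (Fin n → ℝ) →ₗ[ℝ] ℝ := ∑ w ∈ t, (dual K s w).linear

noncomputable def Amap (K : SimplicialComplex ℝ (Fin n → ℝ)) (s t : Finset (Fin n → ℝ)) :
    (Fin n → ℝ) →ₗ[ℝ] (Fin n → ℝ) := ∑ w ∈ t, ((dual K s w).linear).smulRight w

noncomputable def Pmap (K : SimplicialComplex ℝ (Fin n → ℝ)) (s t : Finset (Fin n → ℝ))
    (x : Fin n → ℝ) : (Fin n → ℝ) →ₗ[ℝ] (Fin n → ℝ) :=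
  (sig K s t x)⁻¹ • Amap K s t
    - ((sig K s t x)⁻¹ * (sig K s t x)⁻¹) • (sigLin K s t).smulRight (num K s t x)

noncomputable def chi (a : ℝ) : ℝ := Real.smoothTransition (2 * a - 1)

lemma chi_one : chi 1 = 1 := by
  simp only [chi]; norm_num [Real.smoothTransition.one]

lemma chi_of_le_half {a : ℝ} (h : a ≤ 1/2) : chi a = 0 :=
  Real.smoothTransition.zero_of_nonpos (by linarith)

lemma chi_contDiff : ContDiff ℝ (⊤ : ℕ∞) chi :=
  Real.smoothTransition.contDiff.comp (by fun_prop)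

lemma Pmap_apply (K : SimplicialComplex ℝ (Fin n → ℝ)) (s t : Finset (Fin n → ℝ))
    (x u : Fin n → ℝ) :
    Pmap K s t x u = (sig K s t x)⁻¹ • Amap K s t u
      - ((sig K s t x)⁻¹ * (sig K s t x)⁻¹ * sigLin K s t u) • num K s t x := by
  simp [Pmap, LinearMap.smulRight_apply, smul_smul, mul_comm]

open scoped Classical in
noncomputable def pext (K : SimplicialComplex ℝ (Fin n → ℝ)) (L : Set (Finset (Fin n → ℝ)))
    (δ : Finset (Fin n → ℝ) → (Fin n → ℝ) → AlternatingMap ℝ (Fin n → ℝ) ℝ (Fin p)) :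
    Finset (Fin n → ℝ) → (Fin n → ℝ) → AlternatingMap ℝ (Fin n → ℝ) ℝ (Fin p) :=
  fun s =>
    if s ∈ L then δ s
    else fun x => ∑ t ∈ s.ssubsets.attach,
      (((-1 : ℝ) ^ ((s \ t.1).card + 1)) * chi (sig K s t.1 x)) •
        (pext K L δ t.1 (rho K s t.1 x)).compLinearMap (Pmap K s t.1 x)
termination_by s => s.card
decreasing_by exact Finset.card_lt_card (Finset.mem_ssubsets.mp t.2)

lemma pext_of_mem {K : SimplicialComplex ℝ (Fin n → ℝ)} {L : Set (Finset (Fin n → ℝ))}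
    {δ : Finset (Fin n → ℝ) → (Fin n → ℝ) → AlternatingMap ℝ (Fin n → ℝ) ℝ (Fin p)}
    {s : Finset (Fin n → ℝ)} (h : s ∈ L) : pext K L δ s = δ s := by
  rw [pext, if_pos h]

lemma pext_of_not_mem {K : SimplicialComplex ℝ (Fin n → ℝ)} {L : Set (Finset (Fin n → ℝ))}
    {δ : Finset (Fin n → ℝ) → (Fin n → ℝ) → AlternatingMap ℝ (Fin n → ℝ) ℝ (Fin p)}
    {s : Finset (Fin n → ℝ)} (h : s ∉ L) (x : Fin n → ℝ) :
    pext K L δ s x = ∑ t ∈ s.ssubsets.attach,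
      (((-1 : ℝ) ^ ((s \ t.1).card + 1)) * chi (sig K s t.1 x)) •
        (pext K L δ t.1 (rho K s t.1 x)).compLinearMap (Pmap K s t.1 x) := by
  rw [pext, if_neg h]

end PSF

namespace PSF
variable {n p : ℕ} {K : SimplicialComplex ℝ (Fin n → ℝ)}

lemma sigLin_apply (K : SimplicialComplex ℝ (Fin n → ℝ)) (s t : Finset (Fin n → ℝ))
    (u : Fin n → ℝ) : sigLin K s t u = ∑ w ∈ t, (dual K s w).linear u := by
  simp [sigLin]

lemma Amap_apply (K : SimplicialComplex ℝ (Fin n → ℝ)) (s t : Finset (Fin n → ℝ))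
    (u : Fin n → ℝ) : Amap K s t u = ∑ w ∈ t, ((dual K s w).linear u) • w := by
  simp [Amap]

/-- Barycentric description of a point of `conv t`, `t ⊆ s`. -/
lemma barycentric {s t : Finset (Fin n → ℝ)} (hs : s ∈ K.faces) (hts : t ⊆ s)
    {x : Fin n → ℝ} (hx : x ∈ convexHull ℝ (↑t : Set (Fin n → ℝ))) :
    ∃ a : (Fin n → ℝ) → ℝ, (∀ w ∈ t, 0 ≤ a w) ∧ (∑ w ∈ t, a w = 1) ∧
      (∑ w ∈ t, a w • w = x) ∧ (∀ w ∈ s, dual K s w x = if w ∈ t then a w else 0) := by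
  classical
  rw [Finset.convexHull_eq] at hx
  obtain ⟨a, h0, h1, hc⟩ := hx
  have hcm : ∑ w ∈ t, a w • w = x := by
    rw [← hc, Finset.centerMass_eq_of_sum_1 _ _ h1]; rfl
  refine ⟨a, h0, h1, hcm, ?_⟩
  intro w hw
  have hxc : x = t.affineCombination ℝ id a := by
    rw [affineCombination_eq_centerMass h1, hc]
  have := Finset.map_affineCombination t (id : (Fin n → ℝ) → (Fin n → ℝ)) a h1 (dual K s w)
  rw [hxc, this, affineCombination_eq_centerMass h1, Finset.centerMass_eq_of_sum_1 _ _ h1]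
  have : ∀ y ∈ t, a y • (dual K s w ∘ id) y = if w = y then a y else 0 := by
    intro y hy
    simp only [Function.comp_apply, id_eq, smul_eq_mul]
    rw [dual_spec hs w hw y (hts hy)]
    by_cases h : w = y <;> simp [h]
  rw [Finset.sum_congr rfl this, Finset.sum_ite_eq t w a]

/-- generic vanishing on the vector span -/
lemma span_vanish {t : Finset (Fin n → ℝ)} {W : Type*} [AddCommGroup W] [Module ℝ W]
    (f : (Fin n → ℝ) →ₗ[ℝ] W)
    (hgen : ∀ y ∈ t, ∀ z ∈ t, f (y - z) = 0) :
    ∀ u ∈ vectorSpan ℝ (↑t : Set (Fin n → ℝ)), f u = 0 := by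
  intro u hu
  have hle : vectorSpan ℝ (↑t : Set (Fin n → ℝ)) ≤ LinearMap.ker f := by
    rw [vectorSpan_def, Submodule.span_le]
    rintro v ⟨y, hy, z, hz, rfl⟩
    simp only [SetLike.mem_coe, LinearMap.mem_ker, vsub_eq_sub]
    exact hgen y (by exact_mod_cast hy) z (by exact_mod_cast hz)
  exact LinearMap.mem_ker.mp (hle hu)

lemma dual_linear_notmem {s t : Finset (Fin n → ℝ)} (hs : s ∈ K.faces) (hts : t ⊆ s)
    {w : Fin n → ℝ} (hw : w ∈ s) (hwt : w ∉ t) :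
    ∀ u ∈ vectorSpan ℝ (↑t : Set (Fin n → ℝ)), (dual K s w).linear u = 0 := by
  apply span_vanish
  intro y hy z hz
  have : (dual K s w).linear (y - z) = dual K s w y - dual K s w z := by
    have := (dual K s w).linearMap_vsub y z
    simpa [vsub_eq_sub] using this
  rw [this, dual_spec hs w hw y (hts hy), dual_spec hs w hw z (hts hz)]
  rw [if_neg (by rintro rfl; exact hwt hy), if_neg (by rintro rfl; exact hwt hz)]
  ring

lemma sigLin_vanish {s t : Finset (Fin n → ℝ)} (hs : s ∈ K.faces) (hts : t ⊆ s) :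
    ∀ u ∈ vectorSpan ℝ (↑t : Set (Fin n → ℝ)), sigLin K s t u = 0 := by
  apply span_vanish
  intro y hy z hz
  rw [sigLin_apply]
  have : ∀ w ∈ t, (dual K s w).linear (y - z) = (if w = y then (1:ℝ) else 0) - (if w = z then 1 else 0) := by
    intro w hw
    have h2 : (dual K s w).linear (y - z) = dual K s w y - dual K s w z := by
      have := (dual K s w).linearMap_vsub y z
      simpa [vsub_eq_sub] using this
    rw [h2, dual_spec hs w (hts hw) y (hts hy), dual_spec hs w (hts hw) z (hts hz)]
  rw [Finset.sum_congr rfl this, Finset.sum_sub_distrib]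
  classical
  rw [Finset.sum_ite_eq' t y (fun _ => (1:ℝ)), Finset.sum_ite_eq' t z (fun _ => (1:ℝ))]
  rw [if_pos hy, if_pos hz, sub_self]

lemma Amap_tangent {s t : Finset (Fin n → ℝ)} (hs : s ∈ K.faces) (hts : t ⊆ s) :
    ∀ u ∈ vectorSpan ℝ (↑t : Set (Fin n → ℝ)), Amap K s t u = u := by
  have key : ∀ u ∈ vectorSpan ℝ (↑t : Set (Fin n → ℝ)), (Amap K s t - (LinearMap.id : (Fin n → ℝ) →ₗ[ℝ] (Fin n → ℝ))) u = 0 := by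
    apply span_vanish
    intro y hy z hz
    simp only [LinearMap.sub_apply, LinearMap.id_apply, Amap_apply]
    have : ∀ w ∈ t, ((dual K s w).linear (y - z)) • w
        = ((if w = y then (1:ℝ) else 0) - (if w = z then 1 else 0)) • w := by
      intro w hw
      have h2 : (dual K s w).linear (y - z) = dual K s w y - dual K s w z := by
        have := (dual K s w).linearMap_vsub y z
        simpa [vsub_eq_sub] using this
      rw [h2, dual_spec hs w (hts hw) y (hts hy), dual_spec hs w (hts hw) z (hts hz)]
    rw [Finset.sum_congr rfl this]
    classical
    simp only [sub_smul, ite_smul, one_smul, zero_smul, Finset.sum_sub_distrib]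
    rw [Finset.sum_ite_eq' t y, Finset.sum_ite_eq' t z, if_pos hy, if_pos hz, sub_self]
  intro u hu
  have h0 := key u hu
  rw [LinearMap.sub_apply, LinearMap.id_apply, sub_eq_zero] at h0
  exact h0

end PSF

namespace PSF
variable {n p : ℕ} {K : SimplicialComplex ℝ (Fin n → ℝ)} {s t : Finset (Fin n → ℝ)}
  {x : Fin n → ℝ}

lemma dual_nonneg (hs : s ∈ K.faces) (hts : t ⊆ s)
    (hx : x ∈ convexHull ℝ (↑t : Set (Fin n → ℝ))) :
    ∀ w ∈ s, 0 ≤ dual K s w x := by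
  obtain ⟨a, h0, h1, hcm, hb⟩ := barycentric hs hts hx
  intro w hw
  rw [hb w hw]
  by_cases h : w ∈ t
  · rw [if_pos h]; exact h0 w h
  · rw [if_neg h]

lemma dual_eq_zero_of_not_mem (hs : s ∈ K.faces) (hts : t ⊆ s)
    (hx : x ∈ convexHull ℝ (↑t : Set (Fin n → ℝ)))
    {w : Fin n → ℝ} (hw : w ∈ s) (hwt : w ∉ t) : dual K s w x = 0 := by
  obtain ⟨a, h0, h1, hcm, hb⟩ := barycentric hs hts hx
  rw [hb w hw, if_neg hwt]

lemma sig_inter (hs : s ∈ K.faces) (hts : t ⊆ s)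
    (hx : x ∈ convexHull ℝ (↑t : Set (Fin n → ℝ)))
    {t' : Finset (Fin n → ℝ)} (ht' : t' ⊆ s) :
    sig K s t' x = sig K s (t' ∩ t) x := by
  classical
  refine (Finset.sum_subset (Finset.inter_subset_left) ?_).symm
  intro w hw hw2
  have hwt : w ∉ t := fun h => hw2 (Finset.mem_inter.mpr ⟨hw, h⟩)
  exact dual_eq_zero_of_not_mem hs hts hx (ht' hw) hwt

lemma num_inter (hs : s ∈ K.faces) (hts : t ⊆ s)
    (hx : x ∈ convexHull ℝ (↑t : Set (Fin n → ℝ)))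
    {t' : Finset (Fin n → ℝ)} (ht' : t' ⊆ s) :
    num K s t' x = num K s (t' ∩ t) x := by
  classical
  refine (Finset.sum_subset (Finset.inter_subset_left) ?_).symm
  intro w hw hw2
  have hwt : w ∉ t := fun h => hw2 (Finset.mem_inter.mpr ⟨hw, h⟩)
  rw [dual_eq_zero_of_not_mem hs hts hx (ht' hw) hwt, zero_smul]

lemma sigLin_inter (hs : s ∈ K.faces) (hts : t ⊆ s)
    {t' : Finset (Fin n → ℝ)} (ht' : t' ⊆ s) {u : Fin n → ℝ}
    (hu : u ∈ vectorSpan ℝ (↑t : Set (Fin n → ℝ))) :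
    sigLin K s t' u = sigLin K s (t' ∩ t) u := by
  classical
  rw [sigLin_apply, sigLin_apply]
  refine (Finset.sum_subset (Finset.inter_subset_left) ?_).symm
  intro w hw hw2
  have hwt : w ∉ t := fun h => hw2 (Finset.mem_inter.mpr ⟨hw, h⟩)
  exact dual_linear_notmem hs hts (ht' hw) hwt u hu

lemma Amap_inter (hs : s ∈ K.faces) (hts : t ⊆ s)
    {t' : Finset (Fin n → ℝ)} (ht' : t' ⊆ s) {u : Fin n → ℝ}
    (hu : u ∈ vectorSpan ℝ (↑t : Set (Fin n → ℝ))) :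
    Amap K s t' u = Amap K s (t' ∩ t) u := by
  classical
  rw [Amap_apply, Amap_apply]
  refine (Finset.sum_subset (Finset.inter_subset_left) ?_).symm
  intro w hw hw2
  have hwt : w ∉ t := fun h => hw2 (Finset.mem_inter.mpr ⟨hw, h⟩)
  rw [dual_linear_notmem hs hts (ht' hw) hwt u hu, zero_smul]

lemma sig_one (hs : s ∈ K.faces) (hts : t ⊆ s)
    (hx : x ∈ convexHull ℝ (↑t : Set (Fin n → ℝ))) : sig K s t x = 1 := by
  obtain ⟨a, h0, h1, hcm, hb⟩ := barycentric hs hts hx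
  rw [sig, Finset.sum_congr rfl (fun w hw => by rw [hb w (hts hw), if_pos hw]), h1]

lemma num_self (hs : s ∈ K.faces) (hts : t ⊆ s)
    (hx : x ∈ convexHull ℝ (↑t : Set (Fin n → ℝ))) : num K s t x = x := by
  obtain ⟨a, h0, h1, hcm, hb⟩ := barycentric hs hts hx
  rw [num, Finset.sum_congr rfl (fun w hw => by rw [hb w (hts hw), if_pos hw]), hcm]

lemma rho_self (hs : s ∈ K.faces) (hts : t ⊆ s)
    (hx : x ∈ convexHull ℝ (↑t : Set (Fin n → ℝ))) : rho K s t x = x := by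
  rw [rho, sig_one hs hts hx, num_self hs hts hx, inv_one, one_smul]

lemma Pmap_id (hs : s ∈ K.faces) (hts : t ⊆ s)
    (hx : x ∈ convexHull ℝ (↑t : Set (Fin n → ℝ))) {u : Fin n → ℝ}
    (hu : u ∈ vectorSpan ℝ (↑t : Set (Fin n → ℝ))) : Pmap K s t x u = u := by
  rw [Pmap_apply, sig_one hs hts hx, Amap_tangent hs hts u hu,
    sigLin_vanish hs hts u hu]
  simp

lemma rho_mem (hs : s ∈ K.faces) (hts : t ⊆ s)
    (hx : x ∈ convexHull ℝ (↑t : Set (Fin n → ℝ)))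
    {t' : Finset (Fin n → ℝ)} (ht' : t' ⊆ s) (hσ : 0 < sig K s t' x) :
    rho K s t' x ∈ convexHull ℝ (↑t' : Set (Fin n → ℝ)) := by
  have hcm : rho K s t' x = t'.centerMass (fun w => dual K s w x) id := rfl
  rw [hcm]
  exact Finset.centerMass_mem_convexHull _
    (fun i hi => dual_nonneg hs hts hx i (ht' hi)) hσ
    (fun i hi => by exact_mod_cast hi)

lemma sum_smul_mem_vectorSpan {t : Finset (Fin n → ℝ)} {d : (Fin n → ℝ) → ℝ}
    (hd : ∑ w ∈ t, d w = 0) :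
    ∑ w ∈ t, d w • w ∈ vectorSpan ℝ (↑t : Set (Fin n → ℝ)) := by
  rcases t.eq_empty_or_nonempty with rfl | ⟨w₀, hw₀⟩
  · simp only [Finset.sum_empty]; exact zero_mem _
  · have key : ∑ w ∈ t, d w • w = ∑ w ∈ t, d w • (w - w₀) := by
      rw [Finset.sum_congr rfl (fun w _ => smul_sub (d w) w w₀), Finset.sum_sub_distrib,
        ← Finset.sum_smul, hd, zero_smul, sub_zero]
    rw [key]
    refine Submodule.sum_mem _ (fun w hw => Submodule.smul_mem _ _ ?_)
    have := vsub_mem_vectorSpan (k := ℝ) (s := (↑t : Set (Fin n → ℝ)))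
      (by exact_mod_cast hw : w ∈ (↑t : Set (Fin n → ℝ)))
      (by exact_mod_cast hw₀ : w₀ ∈ (↑t : Set (Fin n → ℝ)))
    simpa [vsub_eq_sub] using this

lemma Pmap_sum_form (K : SimplicialComplex ℝ (Fin n → ℝ)) (s t' : Finset (Fin n → ℝ))
    (x u : Fin n → ℝ) :
    Pmap K s t' x u = ∑ w ∈ t', ((sig K s t' x)⁻¹ * ((dual K s w).linear u)
      - (sig K s t' x)⁻¹ * (sig K s t' x)⁻¹ * (sigLin K s t' u) * (dual K s w x)) • w := by
  rw [Pmap_apply, Amap_apply, num, Finset.smul_sum, Finset.smul_sum,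
    ← Finset.sum_sub_distrib]
  refine Finset.sum_congr rfl (fun w hw => ?_)
  rw [smul_smul, smul_smul, ← sub_smul]

lemma Pmap_mem_span {t' : Finset (Fin n → ℝ)} (hσ : sig K s t' x ≠ 0) (u : Fin n → ℝ) :
    Pmap K s t' x u ∈ vectorSpan ℝ (↑t' : Set (Fin n → ℝ)) := by
  rw [Pmap_sum_form]
  apply sum_smul_mem_vectorSpan
  rw [Finset.sum_sub_distrib, ← Finset.mul_sum, ← Finset.mul_sum, ← sigLin_apply]
  have hsig : ∑ w ∈ t', dual K s w x = sig K s t' x := rfl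
  rw [hsig]
  field_simp
  ring

end PSF

namespace PSF
variable {n p : ℕ} {K : SimplicialComplex ℝ (Fin n → ℝ)}

lemma comb_zero {α : Type*} [DecidableEq α] (W : Finset α → ℝ) (s t : Finset α)
    (hts : t ⊆ s) (hne : t ≠ s) :
    ∑ t' ∈ s.powerset, ((-1:ℝ) ^ ((s \ t').card + 1)) * W (t' ∩ t) = 0 := by
  obtain ⟨a, has, hat⟩ : ∃ a, a ∈ s ∧ a ∉ t := by
    by_contra h
    push_neg at h
    exact hne (Finset.Subset.antisymm hts (fun w hw => h w hw))
  have hs' : s = insert a (s.erase a) := (Finset.insert_erase has).symm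
  rw [hs', Finset.sum_powerset_insert (Finset.notMem_erase a s), ← Finset.sum_add_distrib]
  apply Finset.sum_eq_zero
  intro t' ht'
  have ht'e : t' ⊆ s.erase a := Finset.mem_powerset.mp ht'
  have hat' : a ∉ t' := fun h => Finset.notMem_erase a s (ht'e h)
  have has' : a ∉ s.erase a := Finset.notMem_erase a s
  have h1 : insert a (s.erase a) \ t' = insert a (s.erase a \ t') := by
    ext w
    by_cases hw : w = a
    · subst hw; simp [hat']
    · simp [Finset.mem_sdiff, Finset.mem_insert, hw]
  have h2 : insert a (s.erase a) \ insert a t' = s.erase a \ t' := by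
    ext w
    by_cases hw : w = a
    · subst hw; simp [has']
    · simp [Finset.mem_sdiff, Finset.mem_insert, hw]
  have h3 : insert a t' ∩ t = t' ∩ t := by
    ext w
    by_cases hw : w = a
    · subst hw; simp [hat, hat']
    · simp [Finset.mem_inter, Finset.mem_insert, hw]
  have hanot : a ∉ s.erase a \ t' := fun h => has' (Finset.mem_sdiff.mp h).1
  rw [h1, h2, h3, Finset.card_insert_of_notMem hanot, pow_succ]
  ring

lemma alt_expand (f : AlternatingMap ℝ (Fin n → ℝ) ℝ (Fin p)) (v : Fin p → (Fin n → ℝ)) :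
    f v = ∑ tup : Fin p → Fin n,
      (∏ l, v l (tup l)) * f (fun l => Pi.single (tup l) 1) := by
  classical
  have hv : v = fun l => ∑ j : Fin n, (v l j) • (Pi.single j (1:ℝ) : Fin n → ℝ) := by
    funext l; ext k
    simp [Pi.single_apply, Finset.sum_apply, mul_ite]
  have h1 : f v = f.toMultilinearMap (fun l => ∑ j : Fin n, (v l j) • (Pi.single j (1:ℝ) : Fin n → ℝ)) := by
    rw [← hv]; rfl
  rw [h1, MultilinearMap.map_sum]
  refine Finset.sum_congr rfl (fun tup _ => ?_)
  have := f.toMultilinearMap.map_smul_univ (fun l => v l (tup l))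
    (fun l => Pi.single (tup l) (1:ℝ))
  rw [this]
  simp [smul_eq_mul]

lemma contDiffOn_glue {f : (Fin n → ℝ) → ℝ} {S O₁ O₂ : Set (Fin n → ℝ)}
    (h1 : IsOpen O₁) (h2 : IsOpen O₂) (hcov : S ⊆ O₁ ∪ O₂)
    (hf1 : ContDiffOn ℝ (⊤:ℕ∞) f (S ∩ O₁)) (hf2 : ContDiffOn ℝ (⊤:ℕ∞) f (S ∩ O₂)) :
    ContDiffOn ℝ (⊤:ℕ∞) f S := by
  intro x hx
  rcases hcov hx with hO | hO
  · exact (contDiffWithinAt_inter (h1.mem_nhds hO)).mp (hf1 x ⟨hx, hO⟩)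
  · exact (contDiffWithinAt_inter (h2.mem_nhds hO)).mp (hf2 x ⟨hx, hO⟩)

lemma contDiffOn_finprod {ι : Type*} (A : Finset ι) (f : ι → (Fin n → ℝ) → ℝ)
    {S : Set (Fin n → ℝ)} (h : ∀ i ∈ A, ContDiffOn ℝ (⊤:ℕ∞) (f i) S) :
    ContDiffOn ℝ (⊤:ℕ∞) (fun x => ∏ i ∈ A, f i x) S := by
  classical
  induction A using Finset.induction_on with
  | empty => simpa using contDiffOn_const
  | insert _ _ ha ih =>
    rename_i a A'
    simp_rw [Finset.prod_insert ha]
    exact (h a (Finset.mem_insert_self a A')).mul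
      (ih (fun i hi => h i (Finset.mem_insert_of_mem hi)))

lemma dual_contDiff (K : SimplicialComplex ℝ (Fin n → ℝ)) (s : Finset (Fin n → ℝ))
    (w : Fin n → ℝ) : ContDiff ℝ (⊤:ℕ∞) (fun x => dual K s w x) := by
  have hd : (fun x => dual K s w x)
      = fun x => (dual K s w).linear x + dual K s w 0 := by
    funext x
    conv_lhs => rw [AffineMap.decomp (dual K s w)]
    rfl
  rw [hd]
  exact ((LinearMap.toContinuousLinearMap ((dual K s w).linear)).contDiff).add contDiff_const

lemma sig_contDiff (K : SimplicialComplex ℝ (Fin n → ℝ)) (s t : Finset (Fin n → ℝ)) :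
    ContDiff ℝ (⊤:ℕ∞) (fun x => sig K s t x) :=
  ContDiff.sum (fun w _ => dual_contDiff K s w)

lemma num_contDiff (K : SimplicialComplex ℝ (Fin n → ℝ)) (s t : Finset (Fin n → ℝ)) :
    ContDiff ℝ (⊤:ℕ∞) (fun x => num K s t x) :=
  ContDiff.sum (fun w _ => (dual_contDiff K s w).smul contDiff_const)

lemma num_coord_contDiff (K : SimplicialComplex ℝ (Fin n → ℝ)) (s t : Finset (Fin n → ℝ))
    (j : Fin n) : ContDiff ℝ (⊤:ℕ∞) (fun x => num K s t x j) := by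
  have : (fun x => num K s t x j) = fun x => ∑ w ∈ t, dual K s w x * w j := by
    funext x; simp [num, Finset.sum_apply]
  rw [this]
  exact ContDiff.sum (fun w _ => (dual_contDiff K s w).mul contDiff_const)

lemma nonempty_of_mem_faces {s : Finset (Fin n → ℝ)} (hs : s ∈ K.faces) : s.Nonempty := by
  rw [Finset.nonempty_iff_ne_empty]
  rintro rfl
  exact K.empty_notMem hs

end PSF

namespace PSF
variable {n p : ℕ}

lemma alt_sum_apply {α : Type*} (A : Finset α)
    (g : α → AlternatingMap ℝ (Fin n → ℝ) ℝ (Fin p)) (v : Fin p → (Fin n → ℝ)) :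
    (∑ i ∈ A, g i) v = ∑ i ∈ A, g i v := by
  classical
  induction A using Finset.induction_on with
  | empty => simp
  | insert _ _ ha ih =>
    rename_i a A'
    rw [Finset.sum_insert ha, Finset.sum_insert ha, AlternatingMap.add_apply, ih]

theorem pext_good (K : SimplicialComplex ℝ (Fin n → ℝ)) {L M : Set (Finset (Fin n → ℝ))}
    (hM : IsSubcomplex n K.faces M) (hLsub : IsSubcomplex n K.faces L) (hLM : L ⊆ M)
    {δ : Finset (Fin n → ℝ) → (Fin n → ℝ) → AlternatingMap ℝ (Fin n → ℝ) ℝ (Fin p)}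
    (hδ : IsPiecewiseSmoothForm n p L δ) :
    ∀ (N : ℕ), ∀ s ∈ M, s.card ≤ N →
      ((∀ u : Fin p → (Fin n → ℝ),
        ContDiffOn ℝ (⊤:ℕ∞) (fun x => pext K L δ s x u)
          (convexHull ℝ (↑s : Set (Fin n → ℝ)))) ∧
       (∀ t ∈ M, t ⊆ s → ∀ x ∈ convexHull ℝ (↑t : Set (Fin n → ℝ)),
          ∀ u : Fin p → (Fin n → ℝ),
          (∀ l, u l ∈ vectorSpan ℝ (↑t : Set (Fin n → ℝ))) →
          pext K L δ t x u = pext K L δ s x u)) := by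
  intro N
  induction N with
  | zero =>
    intro s hsM hc
    exact absurd (Finset.card_eq_zero.mp (Nat.le_zero.mp hc))
      (Finset.nonempty_iff_ne_empty.mp (nonempty_of_mem_faces (hM.1 hsM)))
  | succ N IH =>
    intro s hsM hcard
    have hsK : s ∈ K.faces := hM.1 hsM
    constructor
    · -- Part A : smoothness
      intro u
      by_cases hsL : s ∈ L
      · have h := hδ.1 s hsL u
        simpa [pext_of_mem hsL] using h
      · have hrw : (fun x => pext K L δ s x u)
            = fun x => ∑ t' ∈ s.ssubsets.attach,
                (((-1:ℝ) ^ ((s \ t'.1).card + 1)) * chi (sig K s t'.1 x))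
                  * (pext K L δ t'.1 (rho K s t'.1 x) (fun l => Pmap K s t'.1 x (u l))) := by
          funext x
          rw [pext_of_not_mem hsL x, alt_sum_apply]
          exact Finset.sum_congr rfl (fun t' _ => by
            rw [AlternatingMap.smul_apply, AlternatingMap.compLinearMap_apply, smul_eq_mul])
        rw [hrw]
        apply ContDiffOn.sum
        intro t' _
        rcases t'.1.eq_empty_or_nonempty with he | hne
        · apply ContDiffOn.congr (contDiffOn_const (c := (0:ℝ)))
          intro x hx
          have hσ : sig K s t'.1 x = 0 := by simp [sig, he]
          rw [hσ, chi_of_le_half (by norm_num), mul_zero, zero_mul]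
        · have ht's : t'.1 ⊆ s := (Finset.mem_ssubsets.mp t'.2).subset
          have ht'M : t'.1 ∈ M := hM.2 s hsM t'.1 ht's hne
          have hcard' : t'.1.card ≤ N := by
            have := Finset.card_lt_card (Finset.mem_ssubsets.mp t'.2)
            omega
          have IHA := (IH t'.1 ht'M hcard').1
          apply contDiffOn_glue (O₁ := {x | sig K s t'.1 x < 1/2})
            (O₂ := {x | 1/4 < sig K s t'.1 x})
            (isOpen_lt (sig_contDiff K s t'.1).continuous continuous_const)
            (isOpen_lt continuous_const (sig_contDiff K s t'.1).continuous)
            (fun x _ => by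
              by_cases h : sig K s t'.1 x < 1/2
              · exact Or.inl h
              · exact Or.inr (by simp only [Set.mem_setOf_eq]; push_neg at h; linarith))
          · -- on O₁ : identically zero
            apply ContDiffOn.congr (contDiffOn_const (c := (0:ℝ)))
            intro x hx
            rw [chi_of_le_half (le_of_lt hx.2), mul_zero, zero_mul]
          · -- on O₂
            set S₂ := convexHull ℝ (↑s : Set (Fin n → ℝ)) ∩ {x | 1/4 < sig K s t'.1 x}
              with hS₂
            have hne0 : ∀ x ∈ S₂, sig K s t'.1 x ≠ 0 := by
              intro x hx
              have : (0:ℝ) < sig K s t'.1 x := lt_trans (by norm_num) hx.2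
              exact ne_of_gt this
            have hinv : ContDiffOn ℝ (⊤:ℕ∞) (fun x => (sig K s t'.1 x)⁻¹) S₂ :=
              ((sig_contDiff K s t'.1).contDiffOn).inv hne0
            have hrho : ContDiffOn ℝ (⊤:ℕ∞) (fun x => rho K s t'.1 x) S₂ :=
              hinv.smul ((num_contDiff K s t'.1).contDiffOn)
            have hrhomem : Set.MapsTo (fun x => rho K s t'.1 x) S₂
                (convexHull ℝ (↑t'.1 : Set (Fin n → ℝ))) := by
              intro x hx
              exact rho_mem hsK (Finset.Subset.refl s) hx.1 ht's
                (lt_trans (by norm_num) hx.2)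
            refine ContDiffOn.mul
              (contDiffOn_const.mul ((chi_contDiff.comp (sig_contDiff K s t'.1)).contDiffOn))
              ?_
            refine ContDiffOn.congr ?_
              (fun x _ => alt_expand (pext K L δ t'.1 (rho K s t'.1 x))
                (fun l => Pmap K s t'.1 x (u l)))
            apply ContDiffOn.sum
            intro tup _
            refine ContDiffOn.mul ?_ ?_
            · apply contDiffOn_finprod Finset.univ
                (fun l x => (Pmap K s t'.1 x (u l)) (tup l))
              intro l _
              have hfor : (fun x => (Pmap K s t'.1 x (u l)) (tup l))
                  = fun x => (sig K s t'.1 x)⁻¹ * (Amap K s t'.1 (u l) (tup l))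
                    - (sig K s t'.1 x)⁻¹ * ((sig K s t'.1 x)⁻¹
                      * ((sigLin K s t'.1 (u l)) * (num K s t'.1 x (tup l)))) := by
                funext x
                rw [Pmap_apply]
                simp only [Pi.sub_apply, Pi.smul_apply, smul_eq_mul]
                ring
              rw [hfor]
              exact (hinv.mul contDiffOn_const).sub
                (hinv.mul (hinv.mul (contDiffOn_const.mul
                  ((num_coord_contDiff K s t'.1 (tup l)).contDiffOn))))
            · exact ContDiffOn.comp (IHA (fun l => Pi.single (tup l) 1)) hrho hrhomem
    · -- Part B : compatibility
      intro t htM hts x hx u hu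
      by_cases hteq : t = s
      · subst hteq; rfl
      have htK : t ∈ K.faces := hM.1 htM
      by_cases hsL : s ∈ L
      · have htL : t ∈ L := hLsub.2 s hsL t hts (nonempty_of_mem_faces htK)
        rw [pext_of_mem htL, pext_of_mem hsL]
        exact hδ.2 t htL s hsL hts x hx u hu
      · rw [pext_of_not_mem hsL x, alt_sum_apply]
        have hterm : ∀ t' ∈ s.ssubsets.attach,
            ((((-1:ℝ) ^ ((s \ t'.1).card + 1)) * chi (sig K s t'.1 x)) •
              (pext K L δ t'.1 (rho K s t'.1 x)).compLinearMap (Pmap K s t'.1 x)) u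
            = ((-1:ℝ) ^ ((s \ t'.1).card + 1)) *
                (chi (sig K s (t'.1 ∩ t) x) *
                  pext K L δ (t'.1 ∩ t) (rho K s (t'.1 ∩ t) x)
                    (fun l => Pmap K s (t'.1 ∩ t) x (u l))) := by
          intro t' _
          have ht's : t'.1 ⊆ s := (Finset.mem_ssubsets.mp t'.2).subset
          have e1 : sig K s t'.1 x = sig K s (t'.1 ∩ t) x := sig_inter hsK hts hx ht's
          have e2 : rho K s t'.1 x = rho K s (t'.1 ∩ t) x := by
            rw [rho, rho, e1, num_inter hsK hts hx ht's]
          have e3 : (fun l => Pmap K s t'.1 x (u l))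
              = fun l => Pmap K s (t'.1 ∩ t) x (u l) := by
            funext l
            rw [Pmap_apply, Pmap_apply, e1, num_inter hsK hts hx ht's,
              Amap_inter hsK hts ht's (hu l), sigLin_inter hsK hts ht's (hu l)]
          rw [AlternatingMap.smul_apply, AlternatingMap.compLinearMap_apply, smul_eq_mul,
            e1, e2]
          have e4 : (fun l => Pmap K s t'.1 x (u l)) = fun l => Pmap K s (t'.1 ∩ t) x (u l) := e3
          rw [e4]
          by_cases hσ : sig K s (t'.1 ∩ t) x ≤ 1/2
          · rw [chi_of_le_half hσ]; ring
          · push_neg at hσ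
            have hσpos : (0:ℝ) < sig K s (t'.1 ∩ t) x := lt_trans (by norm_num) hσ
            have hnonempty : (t'.1 ∩ t).Nonempty := by
              rcases (t'.1 ∩ t).eq_empty_or_nonempty with he | h
              · rw [he] at hσpos; simp [sig] at hσpos
              · exact h
            have ht'ne : t'.1.Nonempty := hnonempty.mono Finset.inter_subset_left
            have ht'M : t'.1 ∈ M := hM.2 s hsM t'.1 ht's ht'ne
            have ht''M : (t'.1 ∩ t) ∈ M :=
              hM.2 t'.1 ht'M _ Finset.inter_subset_left hnonempty
            have hcard' : t'.1.card ≤ N := by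
              have := Finset.card_lt_card (Finset.mem_ssubsets.mp t'.2)
              omega
            have hrmem : rho K s (t'.1 ∩ t) x ∈ convexHull ℝ (↑(t'.1 ∩ t) : Set (Fin n → ℝ)) :=
              rho_mem hsK hts hx (Finset.inter_subset_left.trans ht's) hσpos
            have hPmem : ∀ l, Pmap K s (t'.1 ∩ t) x (u l)
                ∈ vectorSpan ℝ (↑(t'.1 ∩ t) : Set (Fin n → ℝ)) :=
              fun l => Pmap_mem_span (ne_of_gt hσpos) (u l)
            have hih := (IH t'.1 ht'M hcard').2 (t'.1 ∩ t) ht''M Finset.inter_subset_left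
              (rho K s (t'.1 ∩ t) x) hrmem (fun l => Pmap K s (t'.1 ∩ t) x (u l)) hPmem
            rw [← hih]
            ring
        rw [Finset.sum_congr rfl hterm]
        rw [Finset.sum_attach s.ssubsets (fun r => ((-1:ℝ) ^ ((s \ r).card + 1)) *
          (chi (sig K s (r ∩ t) x) *
            pext K L δ (r ∩ t) (rho K s (r ∩ t) x) (fun l => Pmap K s (r ∩ t) x (u l))))]
        have hsplit : s.ssubsets = s.powerset.erase s := rfl
        rw [hsplit, Finset.sum_erase_eq_sub (Finset.mem_powerset_self s)]
        rw [comb_zero (fun r => chi (sig K s r x) *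
            pext K L δ r (rho K s r x) (fun l => Pmap K s r x (u l))) s t hts
          hteq]
        rw [Finset.sdiff_self, Finset.card_empty, Finset.inter_eq_right.mpr hts]
        rw [sig_one hsK hts hx, chi_one, rho_self hsK hts hx]
        have hPu : (fun l => Pmap K s t x (u l)) = u :=
          funext fun l => Pmap_id hsK hts hx (hu l)
        rw [hPu]
        ring

end PSF


/-- surjectivity of `μ`: for subcomplexes `K₀`, `K₁` of a finite
geometric simplicial complex `K` with `K = K₀ ∪ K₁` and `L = K₀ ∩ K₁`, every
piecewise smooth `p`-form `γ` on `L` is of the form `μ (ξ, η) = η|L - ξ|L` for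
piecewise smooth `p`-forms `ξ` on `K₀` and `η` on `K₁`, obtained by extending
`-(1/2)γ` to `K₀` and `(1/2)γ` to `K₁`. -/
theorem difference_of_restrictions_surjective
    (n p : ℕ) (K : SimplicialComplex ℝ (Fin n → ℝ)) (hfin : K.faces.Finite)
    (K₀ K₁ : Set (Finset (Fin n → ℝ)))
    (hK₀ : IsSubcomplex n K.faces K₀) (hK₁ : IsSubcomplex n K.faces K₁)
    (hcover : K.faces = K₀ ∪ K₁)
    (γ : Finset (Fin n → ℝ) → (Fin n → ℝ) →
      AlternatingMap ℝ (Fin n → ℝ) ℝ (Fin p))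
    (hγ : IsPiecewiseSmoothForm n p (K₀ ∩ K₁) γ) :
    ∃ ξ η : Finset (Fin n → ℝ) → (Fin n → ℝ) →
        AlternatingMap ℝ (Fin n → ℝ) ℝ (Fin p),
      IsPiecewiseSmoothForm n p K₀ ξ ∧
      IsPiecewiseSmoothForm n p K₁ η ∧
      (∀ s ∈ K₀ ∩ K₁, ∀ x : Fin n → ℝ, ξ s x = -((2⁻¹ : ℝ) • γ s x)) ∧
      (∀ s ∈ K₀ ∩ K₁, ∀ x : Fin n → ℝ, η s x = (2⁻¹ : ℝ) • γ s x) ∧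
      (∀ s ∈ K₀ ∩ K₁, ∀ x : Fin n → ℝ, η s x - ξ s x = γ s x) := by
  classical
  set L : Set (Finset (Fin n → ℝ)) := K₀ ∩ K₁ with hLdef
  have hL : IsSubcomplex n K.faces L :=
    ⟨fun s hs => hK₀.1 hs.1,
     fun s hs t h1 h2 => ⟨hK₀.2 s hs.1 t h1 h2, hK₁.2 s hs.2 t h1 h2⟩⟩
  set δξ : Finset (Fin n → ℝ) → (Fin n → ℝ) → AlternatingMap ℝ (Fin n → ℝ) ℝ (Fin p) :=
    fun s x => -((2⁻¹ : ℝ) • γ s x) with hδξdef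
  set δη : Finset (Fin n → ℝ) → (Fin n → ℝ) → AlternatingMap ℝ (Fin n → ℝ) ℝ (Fin p) :=
    fun s x => (2⁻¹ : ℝ) • γ s x with hδηdef
  have hδξ : IsPiecewiseSmoothForm n p L δξ := by
    constructor
    · intro s hs u
      have : (fun x => δξ s x u) = fun x => -((2⁻¹ : ℝ) * γ s x u) := by
        funext x
        simp [hδξdef, AlternatingMap.smul_apply, smul_eq_mul]
      rw [this]
      exact ((hγ.1 s hs u).const_smul (2⁻¹ : ℝ)).neg
    · intro t ht s hs hts x hx u hu
      simp only [hδξdef, AlternatingMap.neg_apply, AlternatingMap.smul_apply]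
      rw [hγ.2 t ht s hs hts x hx u hu]
  have hδη : IsPiecewiseSmoothForm n p L δη := by
    constructor
    · intro s hs u
      have : (fun x => δη s x u) = fun x => (2⁻¹ : ℝ) * γ s x u := by
        funext x
        simp [hδηdef, AlternatingMap.smul_apply, smul_eq_mul]
      rw [this]
      exact (hγ.1 s hs u).const_smul (2⁻¹ : ℝ)
    · intro t ht s hs hts x hx u hu
      simp only [hδηdef, AlternatingMap.smul_apply]
      rw [hγ.2 t ht s hs hts x hx u hu]
  refine ⟨PSF.pext K L δξ, PSF.pext K L δη, ?_, ?_, ?_, ?_, ?_⟩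
  · constructor
    · intro s hs u
      exact (PSF.pext_good K hK₀ hL Set.inter_subset_left hδξ s.card s hs le_rfl).1 u
    · intro t ht s hs hts x hx u hu
      exact (PSF.pext_good K hK₀ hL Set.inter_subset_left hδξ s.card s hs le_rfl).2
        t ht hts x hx u hu
  · constructor
    · intro s hs u
      exact (PSF.pext_good K hK₁ hL Set.inter_subset_right hδη s.card s hs le_rfl).1 u
    · intro t ht s hs hts x hx u hu
      exact (PSF.pext_good K hK₁ hL Set.inter_subset_right hδη s.card s hs le_rfl).2
        t ht hts x hx u hu
  · intro s hs x
    rw [PSF.pext_of_mem hs]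
  · intro s hs x
    rw [PSF.pext_of_mem hs]
  · intro s hs x
    rw [PSF.pext_of_mem hs, PSF.pext_of_mem hs]
    simp only [hδξdef, hδηdef, sub_neg_eq_add, ← add_smul]
    norm_num
end
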